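/- arXiv:1802.09443 — 4 statements merged into one kernel-verified Lean document; each statement's English description precedes it below -/
import Mathlib

section
/- Let f be a smooth function on (0,1) with f(x) = g(x^k) for a smooth g on (0,1) and integer k > 1. If g is smooth on [0,1) and f^{(j)}(0) = 0 whenever k does not divide j, then for each n ≥ 1 one has the representation g(x) = P(x) + (1/(n-1)!) ∫_0^{x^{1/k}} f^{(n)}(t)(x^{1/k} - t)^{n-1} dt, where P is a polynomial of degree at most (n-1)/k. -/
open Set intervalIntegral

/-- Taylor's theorem with integral remainder on `Icc 0 1`. -/
lemma taylor_integral_remainder_Icc01 (f : ℝ → ℝ) (hf : ContDiffOn ℝ (⊤ : ℕ∞) f (Set.Icc 0 1))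
    (m : ℕ) (y : ℝ) (hy : y ∈ Set.Icc (0:ℝ) 1) :
    f y = taylorWithinEval f m (Set.Icc 0 1) 0 y +
      (1 / (m.factorial : ℝ)) *
        ∫ t in (0:ℝ)..y, iteratedDerivWithin (m+1) f (Set.Icc 0 1) t * (y - t) ^ m := by
  have hud : UniqueDiffOn ℝ (Set.Icc (0:ℝ) 1) := uniqueDiffOn_Icc one_pos
  have hfm : ContDiffOn ℝ m f (Set.Icc (0:ℝ) 1) := hf.of_le (by exact_mod_cast le_top)
  have hcontD : ContinuousOn (iteratedDerivWithin (m+1) f (Set.Icc (0:ℝ) 1)) (Set.Icc (0:ℝ) 1) :=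
    hf.continuousOn_iteratedDerivWithin (by exact_mod_cast le_top) hud
  have hdiffD : DifferentiableOn ℝ (iteratedDerivWithin m f (Set.Icc (0:ℝ) 1)) (Set.Ioo (0:ℝ) 1) :=
    (hf.differentiableOn_iteratedDerivWithin (m := m) (by exact_mod_cast ENat.coe_lt_top m) hud).mono Set.Ioo_subset_Icc_self
  set F : ℝ → ℝ := fun t => taylorWithinEval f m (Set.Icc (0:ℝ) 1) t y with hF
  have hIccsub : Set.Icc (0:ℝ) y ⊆ Set.Icc (0:ℝ) 1 := Set.Icc_subset_Icc le_rfl hy.2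
  have hcontF : ContinuousOn F (Set.Icc 0 y) :=
    (continuousOn_taylorWithinEval hud hfm).mono hIccsub
  have hderiv : ∀ t ∈ Set.Ioo (0:ℝ) y, HasDerivAt F
      ((((m.factorial : ℝ))⁻¹ * (y - t) ^ m) •
        iteratedDerivWithin (m+1) f (Set.Icc (0:ℝ) 1) t) t := by
    intro t ht
    exact taylorWithinEval_hasDerivAt_Ioo y one_pos
      ⟨ht.1, ht.2.trans_le hy.2⟩ hfm hdiffD
  have hint : IntervalIntegrable
      (fun t => (((m.factorial : ℝ))⁻¹ * (y - t) ^ m) •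
        iteratedDerivWithin (m+1) f (Set.Icc (0:ℝ) 1) t) MeasureTheory.volume 0 y := by
    apply ContinuousOn.intervalIntegrable
    rw [Set.uIcc_of_le hy.1]
    exact ((continuousOn_const.mul ((continuous_const.sub continuous_id).continuousOn.pow m)).smul
      (hcontD.mono hIccsub))
  have key := integral_eq_sub_of_hasDeriv_right_of_le hy.1 hcontF
    (fun t ht => (hderiv t ht).hasDerivWithinAt) hint
  have hF0 : F y = f y := taylorWithinEval_self f m _ y
  have hint2 : (∫ t in (0:ℝ)..y, (((m.factorial : ℝ))⁻¹ * (y - t) ^ m) •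
        iteratedDerivWithin (m+1) f (Set.Icc (0:ℝ) 1) t)
      = (1 / (m.factorial : ℝ)) *
        ∫ t in (0:ℝ)..y, iteratedDerivWithin (m+1) f (Set.Icc (0:ℝ) 1) t * (y - t) ^ m := by
    rw [← intervalIntegral.integral_const_mul]
    apply intervalIntegral.integral_congr
    intro t _
    simp [smul_eq_mul]
    ring
  rw [hint2, hF0] at key
  linarith [key]

/-- Taylor-with-integral-remainder representation of `g(x) = f(x^(1/k))` when the
Taylor coefficients of `f` at `0` vanish at indices not divisible by `k`. -/
theorem power_substitution_integral_representation
    (k : ℕ) (hk : 1 < k) (f g : ℝ → ℝ)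
    (hf : ContDiffOn ℝ (⊤ : ℕ∞) f (Set.Icc 0 1))
    (hgf : ∀ x ∈ Set.Icc (0:ℝ) 1, g x = f (x ^ (1/(k:ℝ))))
    (hg : ContDiffOn ℝ (⊤ : ℕ∞) g (Set.Icc 0 1))
    (hvan : ∀ j : ℕ, ¬ (k ∣ j) → iteratedDerivWithin j f (Set.Icc 0 1) 0 = 0)
    (n : ℕ) (hn : 1 ≤ n) :
    ∃ P : Polynomial ℝ, P.natDegree ≤ (n-1)/k ∧
      ∀ x ∈ Set.Icc (0:ℝ) 1, g x = P.eval x +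
        (1 / (Nat.factorial (n-1) : ℝ)) *
          ∫ t in (0:ℝ)..(x ^ (1/(k:ℝ))),
            iteratedDerivWithin n f (Set.Icc 0 1) t * (x ^ (1/(k:ℝ)) - t) ^ (n-1) := by
  have hk0 : 0 < k := by omega
  have hkR : (k:ℝ) ≠ 0 := by positivity
  set M : ℕ := (n-1)/k + 1 with hM
  set a : ℕ → ℝ := fun j => iteratedDerivWithin j f (Set.Icc 0 1) 0 / (j.factorial : ℝ) with ha
  refine ⟨∑ m ∈ Finset.range M, Polynomial.C (a (k*m)) * Polynomial.X ^ m, ?_, ?_⟩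
  · apply Polynomial.natDegree_sum_le_of_forall_le
    intro m hm
    calc (Polynomial.C (a (k*m)) * Polynomial.X ^ m).natDegree
        ≤ m := Polynomial.natDegree_C_mul_X_pow_le _ _
      _ ≤ (n-1)/k := by
          have := Finset.mem_range.mp hm; omega
  · intro x hx
    set y : ℝ := x ^ (1/(k:ℝ)) with hy
    have hy0 : 0 ≤ y := Real.rpow_nonneg hx.1 _
    have hy1 : y ≤ 1 := Real.rpow_le_one hx.1 hx.2 (by positivity)
    have hymem : y ∈ Set.Icc (0:ℝ) 1 := ⟨hy0, hy1⟩
    have key := taylor_integral_remainder_Icc01 f hf (n-1) y hymem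
    rw [Nat.sub_add_cancel hn] at key
    rw [hgf x hx, ← hy, key]
    congr 1
    -- now: taylorWithinEval f (n-1) (Icc 0 1) 0 y = P.eval x
    have hpow : ∀ m : ℕ, y ^ (k*m) = x ^ m := by
      intro m
      rw [hy, ← Real.rpow_natCast (x ^ (1/(k:ℝ))) (k*m), ← Real.rpow_mul hx.1,
        ← Real.rpow_natCast x m]
      congr 1
      push_cast
      field_simp
    rw [taylor_within_apply, Nat.sub_add_cancel hn]
    have himg : ∑ j ∈ Finset.range n, (((j.factorial:ℝ))⁻¹ * (y - 0)^j) •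
          iteratedDerivWithin j f (Set.Icc 0 1) 0
        = ∑ j ∈ (Finset.range M).image (fun m => k*m), (((j.factorial:ℝ))⁻¹ * (y - 0)^j) •
          iteratedDerivWithin j f (Set.Icc 0 1) 0 := by
      apply (Finset.sum_subset ?_ ?_).symm
      · intro j hj
        obtain ⟨m, hm, rfl⟩ := Finset.mem_image.mp hj
        have hm' : m ≤ (n-1)/k := by have := Finset.mem_range.mp hm; omega
        have : k * m ≤ k * ((n-1)/k) := Nat.mul_le_mul_left k hm'
        have h2 : k * ((n-1)/k) ≤ n - 1 := Nat.mul_div_le (n-1) k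
        exact Finset.mem_range.mpr (by omega)
      · intro j hj hjn
        have hndvd : ¬ (k ∣ j) := by
          rintro ⟨m, rfl⟩
          apply hjn
          refine Finset.mem_image.mpr ⟨m, ?_, rfl⟩
          have hjlt := Finset.mem_range.mp hj
          have : m ≤ (n-1)/k := Nat.le_div_iff_mul_le hk0 |>.mpr (by
            rw [Nat.mul_comm]; omega)
          exact Finset.mem_range.mpr (by omega)
        rw [hvan j hndvd, smul_zero]
    rw [himg, Finset.sum_image (fun m₁ _ m₂ _ h => by
      exact Nat.eq_of_mul_eq_mul_left hk0 h)]
    rw [Polynomial.eval_finset_sum]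
    apply Finset.sum_congr rfl
    intro m _
    rw [sub_zero, hpow m]
    simp [ha, smul_eq_mul]
    ring
end

section
/- Let M be a positive sequence with (M_n/n!)_{n≥0} non-decreasing, let k > 1 be an integer, and let g ∈ C^∞[0,1] satisfy |g^{(n)}(x)| ≤ M_n / x^{(1-1/k)n} for all n and x ∈ (0,1]. Then g ∈ C^{M^{(k)}}[0,1], i.e., there exist A, B > 0 such that |g^{(n)}(x)| ≤ A B^n M^{(k)}_n for all x ∈ [0,1], where M^{(k)}_n = n! · sup_{j ≤ nk+1} M_j/j!. -/
open Set Finset intervalIntegral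

/-- Taylor polynomial (centered at 1) of the `j`-th derivative of `g`, with `K` terms. -/
noncomputable def tP (g : ℝ → ℝ) (j K : ℕ) (x : ℝ) : ℝ :=
  ∑ i ∈ Finset.range K,
    iteratedDerivWithin (j + i) g (Set.Icc (0:ℝ) 1) 1 * (x - 1) ^ i / (Nat.factorial i : ℝ)

lemma tP_continuous (g : ℝ → ℝ) (j K : ℕ) : Continuous (tP g j K) := by
  unfold tP
  exact continuous_finset_sum _ fun i _ =>
    (continuous_const.mul ((continuous_id.sub continuous_const).pow i)).div_const _

lemma tP_hasDerivAt (g : ℝ → ℝ) (j K : ℕ) (x : ℝ) :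
    HasDerivAt (tP g j (K + 1)) (tP g (j + 1) K x) x := by
  have h : ∀ i ∈ Finset.range (K + 1), HasDerivAt
      (fun y => iteratedDerivWithin (j + i) g (Set.Icc (0:ℝ) 1) 1 * (y - 1) ^ i /
        (Nat.factorial i : ℝ))
      (iteratedDerivWithin (j + i) g (Set.Icc (0:ℝ) 1) 1 * ((i : ℝ) * (x - 1) ^ (i - 1)) /
        (Nat.factorial i : ℝ)) x := by
    intro i _
    have h1 : HasDerivAt (fun y : ℝ => (y - 1) ^ i) ((i : ℝ) * (x - 1) ^ (i - 1)) x := by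
      simpa using ((hasDerivAt_id x).sub_const 1).fun_pow i
    exact (h1.const_mul _).div_const _
  have h2 := HasDerivAt.fun_sum h
  have heq : tP g (j + 1) K x = ∑ i ∈ Finset.range (K + 1),
      iteratedDerivWithin (j + i) g (Set.Icc (0:ℝ) 1) 1 * ((i : ℝ) * (x - 1) ^ (i - 1)) /
        (Nat.factorial i : ℝ) := by
    rw [Finset.sum_range_succ']
    simp only [Nat.cast_zero, zero_mul, mul_zero, zero_div, add_zero]
    unfold tP
    apply Finset.sum_congr rfl
    intro i _
    have hj : j + (i + 1) = j + 1 + i := by omega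
    rw [hj, Nat.add_sub_cancel]
    have hne : ((i : ℝ) + 1) ≠ 0 := by positivity
    push_cast [Nat.factorial_succ]
    field_simp
  rw [heq] at *
  exact h2.congr_deriv heq.symm

/-- remainder -/
noncomputable def remT (g : ℝ → ℝ) (j K : ℕ) (x : ℝ) : ℝ :=
  iteratedDerivWithin j g (Set.Icc (0:ℝ) 1) x - tP g j K x

lemma remT_continuousOn (g : ℝ → ℝ) (hg : ContDiffOn ℝ (⊤ : ℕ∞) g (Set.Icc 0 1)) (j K : ℕ) :
    ContinuousOn (remT g j K) (Set.Icc (0:ℝ) 1) :=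
  (hg.continuousOn_iteratedDerivWithin (by exact_mod_cast le_top) (uniqueDiffOn_Icc zero_lt_one)).sub
    (tP_continuous g j K).continuousOn

lemma tP_one (g : ℝ → ℝ) (j K : ℕ) :
    tP g j (K + 1) 1 = iteratedDerivWithin j g (Set.Icc (0:ℝ) 1) 1 := by
  unfold tP
  rw [Finset.sum_range_succ']
  simp

lemma remT_eq_neg_integral (g : ℝ → ℝ) (hg : ContDiffOn ℝ (⊤ : ℕ∞) g (Set.Icc 0 1)) (j K : ℕ)
    {x : ℝ} (hx : x ∈ Set.Ioc (0:ℝ) 1) :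
    remT g j (K + 1) x = - ∫ t in x..1, remT g (j + 1) K t := by
  have hS : UniqueDiffOn ℝ (Set.Icc (0:ℝ) 1) := uniqueDiffOn_Icc zero_lt_one
  have hsub : Set.Icc x 1 ⊆ Set.Icc (0:ℝ) 1 := Set.Icc_subset_Icc hx.1.le le_rfl
  have hder : ∀ t ∈ Set.Ioo x 1,
      HasDerivWithinAt (remT g j (K + 1)) (remT g (j + 1) K t) (Set.Ioi t) t := by
    intro t ht
    have ht0 : 0 < t := hx.1.trans ht.1
    have htS : t ∈ Set.Icc (0:ℝ) 1 := ⟨ht0.le, ht.2.le⟩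
    have hdiff : DifferentiableOn ℝ (iteratedDerivWithin j g (Set.Icc (0:ℝ) 1))
        (Set.Icc (0:ℝ) 1) :=
      hg.differentiableOn_iteratedDerivWithin (by exact_mod_cast ENat.coe_lt_top j) hS
    have h1 : HasDerivWithinAt (iteratedDerivWithin j g (Set.Icc (0:ℝ) 1))
        (iteratedDerivWithin (j + 1) g (Set.Icc (0:ℝ) 1) t) (Set.Icc (0:ℝ) 1) t := by
      rw [iteratedDerivWithin_succ]
      exact (hdiff t htS).hasDerivWithinAt
    have h2 : HasDerivAt (iteratedDerivWithin j g (Set.Icc (0:ℝ) 1))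
        (iteratedDerivWithin (j + 1) g (Set.Icc (0:ℝ) 1) t) t :=
      h1.hasDerivAt (Icc_mem_nhds ht0 ht.2)
    exact ((h2.sub (tP_hasDerivAt g j K t)).hasDerivWithinAt)
  have hcont : ContinuousOn (remT g j (K + 1)) (Set.Icc x 1) :=
    (remT_continuousOn g hg j (K + 1)).mono hsub
  have hint : IntervalIntegrable (remT g (j + 1) K) MeasureTheory.volume x 1 := by
    apply ContinuousOn.intervalIntegrable
    rw [Set.uIcc_of_le hx.2]
    exact (remT_continuousOn g hg (j + 1) K).mono hsub
  have hFTC := intervalIntegral.integral_eq_sub_of_hasDeriv_right_of_le hx.2 hcont hder hint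
  have hF1 : remT g j (K + 1) 1 = 0 := by
    unfold remT
    rw [tP_one, sub_self]
  rw [hF1] at hFTC
  linarith

lemma remT_step (g : ℝ → ℝ) (hg : ContDiffOn ℝ (⊤ : ℕ∞) g (Set.Icc 0 1)) (j K : ℕ)
    {x : ℝ} (hx : x ∈ Set.Ioc (0:ℝ) 1) {D e : ℝ} (hD : 0 ≤ D) (he : e ≠ -1)
    (hb : ∀ t ∈ Set.Icc x 1, |remT g (j + 1) K t| ≤ D * t ^ e) :
    |remT g j (K + 1) x| ≤ D * ((1 - x ^ (e + 1)) / (e + 1)) := by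
  have hx1 : x ≤ 1 := hx.2
  have hsub : Set.Icc x 1 ⊆ Set.Icc (0:ℝ) 1 := Set.Icc_subset_Icc hx.1.le le_rfl
  have hcont : ContinuousOn (remT g (j + 1) K) (Set.Icc x 1) :=
    (remT_continuousOn g hg (j + 1) K).mono hsub
  have hcontb : ContinuousOn (fun t : ℝ => D * t ^ e) (Set.Icc x 1) := by
    apply continuousOn_const.mul
    apply ContinuousOn.rpow_const continuousOn_id
    intro t ht
    exact Or.inl (ne_of_gt (lt_of_lt_of_le hx.1 ht.1))
  have hint1 : IntervalIntegrable (fun t => |remT g (j + 1) K t|) MeasureTheory.volume x 1 := by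
    apply ContinuousOn.intervalIntegrable
    rw [Set.uIcc_of_le hx1]
    exact hcont.abs
  have hint2 : IntervalIntegrable (fun t : ℝ => D * t ^ e) MeasureTheory.volume x 1 := by
    apply ContinuousOn.intervalIntegrable
    rw [Set.uIcc_of_le hx1]
    exact hcontb
  rw [remT_eq_neg_integral g hg j K hx, abs_neg]
  calc |∫ t in x..1, remT g (j + 1) K t|
      ≤ ∫ t in x..1, |remT g (j + 1) K t| := by
        simpa [Real.norm_eq_abs] using
          intervalIntegral.norm_integral_le_integral_norm (f := remT g (j + 1) K)
            (μ := MeasureTheory.volume) (a := x) (b := 1) hx1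
    _ ≤ ∫ t in x..1, D * t ^ e := intervalIntegral.integral_mono_on hx1 hint1 hint2 hb
    _ = D * ∫ t in x..1, (t:ℝ) ^ e := intervalIntegral.integral_const_mul _ _
    _ = D * ((1 - x ^ (e + 1)) / (e + 1)) := by
        rw [integral_rpow]
        · norm_num
        · refine Or.inr ⟨he, ?_⟩
          rw [Set.uIcc_of_le hx1]
          intro h0
          exact absurd h0.1 (not_le.mpr hx.1)

lemma key_ind (M : ℕ → ℝ) (hM : ∀ n, 0 < M n) (k : ℕ) (hk : 1 < k)
    (g : ℝ → ℝ) (hg : ContDiffOn ℝ (⊤ : ℕ∞) g (Set.Icc 0 1))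
    (hbound : ∀ n : ℕ, ∀ x ∈ Set.Ioc (0:ℝ) 1,
      |iteratedDerivWithin n g (Set.Icc 0 1) x| ≤ M n / x ^ ((1 - 1/(k:ℝ)) * n))
    (n : ℕ) :
    ∀ K j : ℕ, j + K = n * k + 1 → n + 1 ≤ j → ∀ x ∈ Set.Ioc (0:ℝ) 1,
      |remT g j K x| ≤
        (M (n * k + 1) / ∏ l ∈ Finset.Ico j (n * k + 1), ((l:ℝ) - n - 1/k)) *
          x ^ ((n:ℝ) + 1/k - j) := by
  have hk0 : (k:ℝ) ≠ 0 := by positivity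
  have hk2 : (2:ℝ) ≤ (k:ℝ) := by exact_mod_cast hk
  have hkinv : 1/(k:ℝ) ≤ 1/2 := by
    rw [div_le_div_iff₀ (by positivity) (by norm_num)]; linarith
  have hprodpos : ∀ j : ℕ, n + 1 ≤ j →
      0 < ∏ l ∈ Finset.Ico j (n * k + 1), ((l:ℝ) - n - 1/k) := by
    intro j hj
    apply Finset.prod_pos
    intro l hl
    have hl1 : n + 1 ≤ l := le_trans hj (Finset.mem_Ico.mp hl).1
    have : (n:ℝ) + 1 ≤ (l:ℝ) := by exact_mod_cast hl1
    linarith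
  intro K
  induction K with
  | zero =>
    intro j hjK hj x hx
    have hj' : j = n * k + 1 := by omega
    subst hj'
    simp only [remT, tP, Finset.range_zero, Finset.sum_empty, sub_zero, Finset.Ico_self,
      Finset.prod_empty, div_one]
    have hexp : (n:ℝ) + 1/(k:ℝ) - ((n * k + 1 : ℕ) : ℝ)
        = -((1 - 1/(k:ℝ)) * ((n * k + 1 : ℕ) : ℝ)) := by
      push_cast
      field_simp
      ring
    rw [hexp, Real.rpow_neg hx.1.le, ← div_eq_mul_inv]
    exact hbound (n * k + 1) x hx
  | succ K ih =>
    intro j hjK hj x hx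
    have hjm : j < n * k + 1 := by omega
    have hjR : (n:ℝ) + 1 ≤ (j:ℝ) := by exact_mod_cast hj
    set d : ℝ := (j:ℝ) - n - 1/k with hd
    have hdpos : 0 < d := by rw [hd]; linarith
    set Pr : ℝ := ∏ l ∈ Finset.Ico (j + 1) (n * k + 1), ((l:ℝ) - n - 1/k) with hPr
    have hPrpos : 0 < Pr := hprodpos (j + 1) (by omega)
    set D : ℝ := M (n * k + 1) / Pr with hD
    have hDpos : 0 < D := div_pos (hM _) hPrpos
    set e : ℝ := (n:ℝ) + 1/k - ((j:ℝ) + 1) with he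
    have he1 : e + 1 = (n:ℝ) + 1/k - j := by rw [he]; ring
    have hene : e ≠ -1 := by
      intro h
      have : e + 1 = 0 := by rw [h]; ring
      rw [he1] at this
      have h1k : 0 < 1/(k:ℝ) := by positivity
      have : (n:ℝ) + 1/k - j < 0 := by linarith
      linarith [this, ‹(n:ℝ) + 1/(k:ℝ) - j = 0›]
    have hb : ∀ t ∈ Set.Icc x 1, |remT g (j + 1) K t| ≤ D * t ^ e := by
      intro t ht
      have htIoc : t ∈ Set.Ioc (0:ℝ) 1 := ⟨lt_of_lt_of_le hx.1 ht.1, ht.2⟩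
      have := ih (j + 1) (by omega) (by omega) t htIoc
      simpa [hD, hPr, he, Nat.cast_add, Nat.cast_one] using this
    have hstep := remT_step g hg j K hx hDpos.le hene hb
    have hsplit : ∏ l ∈ Finset.Ico j (n * k + 1), ((l:ℝ) - n - 1/k) = d * Pr := by
      rw [hPr, hd]
      exact Finset.prod_eq_prod_Ico_succ_bot hjm _
    have hc : e + 1 = -d := by rw [he1, hd]; ring
    have hxc1 : 1 ≤ x ^ (e + 1) := by
      apply Real.one_le_rpow_of_pos_of_le_one_of_nonpos hx.1 hx.2
      rw [hc]; linarith
    calc |remT g j (K + 1) x| ≤ D * ((1 - x ^ (e + 1)) / (e + 1)) := hstep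
      _ = D * ((x ^ (e + 1) - 1) / d) := by rw [hc, div_neg, ← neg_div, neg_sub]
      _ ≤ D * (x ^ (e + 1) / d) := by
          have hD0 : 0 ≤ D := hDpos.le
          have hd0 : 0 ≤ d := hdpos.le
          gcongr
          linarith
      _ = M (n * k + 1) * x ^ (e + 1) / (Pr * d) := by rw [hD, div_mul_div_comm]
      _ = (M (n * k + 1) / (d * Pr)) * x ^ (e + 1) := by
          rw [div_mul_eq_mul_div, mul_comm Pr d]
      _ = (M (n * k + 1) / ∏ l ∈ Finset.Ico j (n * k + 1), ((l:ℝ) - n - 1/k)) *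
            x ^ ((n:ℝ) + 1/k - j) := by rw [hsplit, ← he1]

lemma key_pointwise (M : ℕ → ℝ) (hM : ∀ n, 0 < M n) (k : ℕ) (hk : 1 < k)
    (g : ℝ → ℝ) (hg : ContDiffOn ℝ (⊤ : ℕ∞) g (Set.Icc 0 1))
    (hbound : ∀ n : ℕ, ∀ x ∈ Set.Ioc (0:ℝ) 1,
      |iteratedDerivWithin n g (Set.Icc 0 1) x| ≤ M n / x ^ ((1 - 1/(k:ℝ)) * n))
    (n : ℕ) {x : ℝ} (hx : x ∈ Set.Ioc (0:ℝ) 1) :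
    |iteratedDerivWithin n g (Set.Icc 0 1) x| ≤
      (∑ i ∈ Finset.range (n * (k - 1) + 1), M (n + i) / (Nat.factorial i : ℝ))
        + (k:ℝ) * (M (n * k + 1) * 2 ^ (n * (k - 1)) /
            (Nat.factorial (n * (k - 1)) : ℝ)) := by
  have hk0 : (0:ℝ) < (k:ℝ) := by positivity
  have hk2 : (2:ℝ) ≤ (k:ℝ) := by exact_mod_cast hk
  have hkinv : 1/(k:ℝ) ≤ 1/2 := by
    rw [div_le_div_iff₀ (by positivity) (by norm_num)]; linarith
  set Kn := n * (k - 1) with hKn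
  have hmK : n + 1 + Kn = n * k + 1 := by
    have : 1 ≤ k := hk.le
    cases' Nat.exists_eq_add_of_le this with c hc
    subst hc
    simp [hKn, Nat.mul_add, Nat.add_mul, Nat.add_sub_cancel_left]
    ring
  -- bound on the product
  set P : ℝ := ∏ l ∈ Finset.Ico (n + 1) (n * k + 1), ((l:ℝ) - n - 1/k) with hP
  have hq : ((Nat.factorial Kn : ℝ) / 2 ^ Kn) ≤ P := by
    rw [hP, Finset.prod_Ico_eq_prod_range]
    have hKn' : n * k + 1 - (n + 1) = Kn := by omega
    rw [hKn']
    have h1 : ∀ i ∈ Finset.range Kn, (0:ℝ) ≤ ((i:ℝ) + 1) / 2 := by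
      intro i _; positivity
    have h2 : ∀ i ∈ Finset.range Kn, ((i:ℝ) + 1) / 2 ≤ ((n + 1 + i : ℕ) : ℝ) - n - 1/k := by
      intro i _
      push_cast
      linarith
    calc ((Nat.factorial Kn : ℝ) / 2 ^ Kn)
        = ∏ i ∈ Finset.range Kn, (((i:ℝ) + 1) / 2) := by
          rw [Finset.prod_div_distrib, Finset.prod_const, Finset.card_range]
          congr 1
          exact_mod_cast (Finset.prod_range_add_one_eq_factorial Kn).symm
      _ ≤ ∏ i ∈ Finset.range Kn, (((n + 1 + i : ℕ) : ℝ) - n - 1/k) :=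
          Finset.prod_le_prod h1 h2
  have hqpos : (0:ℝ) < (Nat.factorial Kn : ℝ) / 2 ^ Kn := by positivity
  have hPpos : (0:ℝ) < P := lt_of_lt_of_le hqpos hq
  -- bound |remT|
  have hrem : |remT g n (Kn + 1) x| ≤ (k:ℝ) * (M (n * k + 1) * 2 ^ Kn /
      (Nat.factorial Kn : ℝ)) := by
    have hb : ∀ t ∈ Set.Icc x 1, |remT g (n + 1) Kn t| ≤
        (M (n * k + 1) / P) * t ^ (1/(k:ℝ) - 1) := by
      intro t ht
      have htIoc : t ∈ Set.Ioc (0:ℝ) 1 := ⟨lt_of_lt_of_le hx.1 ht.1, ht.2⟩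
      have := key_ind M hM k hk g hg hbound n Kn (n + 1) hmK (le_refl _) t htIoc
      have hexp : (n:ℝ) + 1/(k:ℝ) - ((n + 1 : ℕ):ℝ) = 1/(k:ℝ) - 1 := by push_cast; ring
      rwa [hexp] at this
    have hene : (1/(k:ℝ) - 1) ≠ -1 := by
      intro h
      have : 1/(k:ℝ) = 0 := by linarith
      have : (0:ℝ) < 1/(k:ℝ) := by positivity
      linarith
    have hstep := remT_step g hg n Kn hx
      (div_pos (hM _) hPpos).le hene hb
    have he1 : (1/(k:ℝ) - 1) + 1 = 1/(k:ℝ) := by ring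
    rw [he1] at hstep
    have hint : (1 - x ^ (1/(k:ℝ))) / (1/(k:ℝ)) ≤ (k:ℝ) := by
      rw [div_le_iff₀ (by positivity)]
      have : (0:ℝ) ≤ x ^ (1/(k:ℝ)) := Real.rpow_nonneg hx.1.le _
      have hkk : (k:ℝ) * (1/(k:ℝ)) = 1 := by field_simp
      linarith
    calc |remT g n (Kn + 1) x| ≤ (M (n * k + 1) / P) * ((1 - x ^ (1/(k:ℝ))) / (1/(k:ℝ))) :=
          hstep
      _ ≤ (M (n * k + 1) / P) * (k:ℝ) := by
          apply mul_le_mul_of_nonneg_left hint (div_pos (hM _) hPpos).le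
      _ ≤ (M (n * k + 1) / ((Nat.factorial Kn : ℝ) / 2 ^ Kn)) * (k:ℝ) := by
          apply mul_le_mul_of_nonneg_right _ hk0.le
          exact div_le_div_of_nonneg_left (hM _).le hqpos hq
      _ = (k:ℝ) * (M (n * k + 1) * 2 ^ Kn / (Nat.factorial Kn : ℝ)) := by
          rw [div_div_eq_mul_div]; ring
  -- bound |tP|
  have htp : |tP g n (Kn + 1) x| ≤ ∑ i ∈ Finset.range (Kn + 1), M (n + i) /
      (Nat.factorial i : ℝ) := by
    unfold tP
    refine le_trans (Finset.abs_sum_le_sum_abs _ _) (Finset.sum_le_sum ?_)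
    intro i _
    rw [abs_div, abs_mul]
    have h1 : |iteratedDerivWithin (n + i) g (Set.Icc (0:ℝ) 1) 1| ≤ M (n + i) := by
      have := hbound (n + i) 1 ⟨zero_lt_one, le_refl _⟩
      simpa using this
    have h2 : |(x - 1) ^ i| ≤ 1 := by
      rw [abs_pow]
      apply pow_le_one₀ (abs_nonneg _)
      rw [abs_le]
      constructor <;> [linarith [hx.1]; linarith [hx.2]]
    have h3 : |(Nat.factorial i : ℝ)| = (Nat.factorial i : ℝ) := by
      rw [abs_of_pos]; positivity
    rw [h3]
    apply div_le_div_of_nonneg_right _ (by positivity : (0:ℝ) ≤ (Nat.factorial i : ℝ))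
    calc |iteratedDerivWithin (n + i) g (Set.Icc (0:ℝ) 1) 1| * |(x - 1) ^ i|
        ≤ M (n + i) * 1 := mul_le_mul h1 h2 (abs_nonneg _) ((hM _).le)
      _ = M (n + i) := mul_one _
  -- combine
  have hdecomp : iteratedDerivWithin n g (Set.Icc (0:ℝ) 1) x
      = tP g n (Kn + 1) x + remT g n (Kn + 1) x := by
    unfold remT; ring
  calc |iteratedDerivWithin n g (Set.Icc (0:ℝ) 1) x|
      ≤ |tP g n (Kn + 1) x| + |remT g n (Kn + 1) x| := by
        rw [hdecomp]; exact abs_add_le _ _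
    _ ≤ _ := add_le_add htp hrem

lemma nat_choose_le_two_pow (a b : ℕ) : (a.choose b : ℝ) ≤ 2 ^ a := by
  have h : a.choose b ≤ 2 ^ a := by
    by_cases hb : b ≤ a
    · calc a.choose b ≤ ∑ j ∈ Finset.range (a + 1), a.choose j :=
            Finset.single_le_sum (fun j _ => Nat.zero_le _)
              (Finset.mem_range.mpr (Nat.lt_succ_of_le hb))
        _ = 2 ^ a := Nat.sum_range_choose a
    · rw [Nat.choose_eq_zero_of_lt (lt_of_not_ge hb)]
      exact Nat.zero_le _
  exact_mod_cast h

/-- If `(M n / n!)` is non-decreasing and `|g^(n)(x)| ≤ M n / x^((1-1/k)n)` on `(0,1]`,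
then `g` belongs to the Carleman class `C^{M^(k)}[0,1]` where
`M^(k)_n = n! · sup_{j ≤ nk+1} M j / j!`. -/
theorem extra_smoothness
    (M : ℕ → ℝ) (hM : ∀ n, 0 < M n)
    (hmono : Monotone fun n => M n / (Nat.factorial n : ℝ))
    (k : ℕ) (hk : 1 < k)
    (g : ℝ → ℝ) (hg : ContDiffOn ℝ (⊤ : ℕ∞) g (Set.Icc 0 1))
    (hbound : ∀ n : ℕ, ∀ x ∈ Set.Ioc (0:ℝ) 1,
      |iteratedDerivWithin n g (Set.Icc 0 1) x| ≤ M n / x ^ ((1 - 1/(k:ℝ)) * n)) :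
    ∃ A B : ℝ, 0 < A ∧ 0 < B ∧ ∀ n : ℕ, ∀ x ∈ Set.Icc (0:ℝ) 1,
      |iteratedDerivWithin n g (Set.Icc 0 1) x| ≤
        A * B^n * ((Nat.factorial n : ℝ) * ⨆ j : Fin (n*k+2), M j / (Nat.factorial j : ℝ)) := by
  refine ⟨2 * ((k:ℝ) + 1), 4 ^ k, by positivity, by positivity, ?_⟩
  intro n x hx
  set τ : ℝ := ⨆ j : Fin (n*k+2), M j / (Nat.factorial j : ℝ)
  have hτb : ∀ j : ℕ, j ≤ n * k + 1 → M j / (Nat.factorial j : ℝ) ≤ τ := by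
    intro j hj
    exact le_ciSup (f := fun j : Fin (n*k+2) => M (j:ℕ) / (Nat.factorial (j:ℕ) : ℝ))
      (Set.Finite.bddAbove (Set.finite_range _)) (⟨j, by omega⟩ : Fin (n*k+2))
  have hτpos : 0 < τ := lt_of_lt_of_le
    (div_pos (hM 0) (by positivity : (0:ℝ) < (Nat.factorial 0 : ℝ))) (hτb 0 (by omega))
  have hMle : ∀ j : ℕ, j ≤ n * k + 1 → M j ≤ (Nat.factorial j : ℝ) * τ := by
    intro j hj
    have h := hτb j hj
    rw [div_le_iff₀ (by positivity)] at h
    linarith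
  suffices h : ∀ y ∈ Set.Ioc (0:ℝ) 1, |iteratedDerivWithin n g (Set.Icc 0 1) y| ≤
      2 * ((k:ℝ) + 1) * (4 ^ k) ^ n * ((Nat.factorial n : ℝ) * τ) by
    rcases eq_or_lt_of_le hx.1 with h0 | h0
    · -- x = 0 : use continuity
      rw [← h0]
      have hcw : ContinuousWithinAt (iteratedDerivWithin n g (Set.Icc (0:ℝ) 1))
          (Set.Ioc (0:ℝ) 1) 0 :=
        ((hg.continuousOn_iteratedDerivWithin (by exact_mod_cast le_top) (uniqueDiffOn_Icc zero_lt_one)) 0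
          ⟨le_refl 0, zero_le_one⟩).mono Set.Ioc_subset_Icc_self
      haveI : (nhdsWithin (0:ℝ) (Set.Ioc (0:ℝ) 1)).NeBot := by
        apply mem_closure_iff_nhdsWithin_neBot.mp
        rw [closure_Ioc (zero_ne_one' ℝ)]
        exact ⟨le_refl 0, zero_le_one⟩
      have htend : Filter.Tendsto (fun y => |iteratedDerivWithin n g (Set.Icc (0:ℝ) 1) y|)
          (nhdsWithin (0:ℝ) (Set.Ioc (0:ℝ) 1))
          (nhds |iteratedDerivWithin n g (Set.Icc (0:ℝ) 1) 0|) :=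
        (continuous_abs.tendsto _).comp hcw
      exact le_of_tendsto htend (eventually_nhdsWithin_of_forall h)
    · exact h x ⟨h0, hx.2⟩
  intro y hy
  refine le_trans (key_pointwise M hM k hk g hg hbound n hy) ?_
  -- pure arithmetic from here
  obtain ⟨q, rfl⟩ : ∃ q, k = q + 1 := ⟨k - 1, by omega⟩
  simp only [Nat.add_sub_cancel] at *
  have e1 : n * (q + 1) + 1 = n * q + n + 1 := by ring
  rw [e1]
  set a := n * q with ha
  set F : ℝ := (Nat.factorial n : ℝ) with hF
  have hFpos : 0 < F := by rw [hF]; positivity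
  have hmle : a + n + 1 ≤ n * (q + 1) + 1 := by rw [Nat.mul_succ]
  -- part 1
  have hpart1 : ∑ i ∈ Finset.range (a + 1), M (n + i) / (Nat.factorial i : ℝ) ≤
      2 ^ (2*a + 2*n + 1) * (F * τ) := by
    have hterm : ∀ i ∈ Finset.range (a + 1), M (n + i) / (Nat.factorial i : ℝ) ≤
        2 ^ (n + a) * (F * τ) := by
      intro i hi
      have hia : i ≤ a := Nat.lt_succ_iff.mp (Finset.mem_range.mp hi)
      have hni : n + i ≤ n * (q + 1) + 1 := by
        calc n + i ≤ n + a := Nat.add_le_add_left hia n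
          _ ≤ n * (q + 1) + 1 := by rw [Nat.mul_succ]; omega
      have hfact : ((n + i).factorial : ℝ) =
          ((n + i).choose n : ℝ) * F * (Nat.factorial i : ℝ) := by
        have h' := Nat.choose_mul_factorial_mul_factorial (Nat.le_add_right n i)
        rw [Nat.add_sub_cancel_left] at h'
        rw [hF]
        exact_mod_cast h'.symm
      have hipos : (0:ℝ) < (Nat.factorial i : ℝ) := by positivity
      calc M (n + i) / (Nat.factorial i : ℝ)
          ≤ (((n + i).factorial : ℝ) * τ) / (Nat.factorial i : ℝ) :=
            div_le_div_of_nonneg_right (hMle _ hni) hipos.le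
        _ = ((n + i).choose n : ℝ) * F * τ := by
            rw [div_eq_iff (ne_of_gt hipos), hfact]; ring
        _ ≤ 2 ^ (n + a) * (F * τ) := by
            have hch : ((n + i).choose n : ℝ) ≤ 2 ^ (n + i) := nat_choose_le_two_pow _ _
            have h2 : (2:ℝ) ^ (n + i) ≤ 2 ^ (n + a) :=
              pow_le_pow_right₀ one_le_two (Nat.add_le_add_left hia n)
            calc ((n + i).choose n : ℝ) * F * τ ≤ 2 ^ (n + a) * F * τ := by
                  apply mul_le_mul_of_nonneg_right _ hτpos.le
                  exact mul_le_mul_of_nonneg_right (le_trans hch h2) hFpos.le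
              _ = 2 ^ (n + a) * (F * τ) := by ring
    calc ∑ i ∈ Finset.range (a + 1), M (n + i) / (Nat.factorial i : ℝ)
        ≤ ∑ _i ∈ Finset.range (a + 1), 2 ^ (n + a) * (F * τ) := Finset.sum_le_sum hterm
      _ = ((a + 1 : ℕ) : ℝ) * (2 ^ (n + a) * (F * τ)) := by
          rw [Finset.sum_const, Finset.card_range, nsmul_eq_mul]
      _ ≤ (2:ℝ) ^ (a + 1) * (2 ^ (n + a) * (F * τ)) := by
          apply mul_le_mul_of_nonneg_right _ (by positivity)
          exact_mod_cast (Nat.lt_two_pow_self (n := a + 1)).le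
      _ = 2 ^ ((a + 1) + (n + a)) * (F * τ) := by rw [← mul_assoc, ← pow_add]
      _ ≤ 2 ^ (2*a + 2*n + 1) * (F * τ) := by
          apply mul_le_mul_of_nonneg_right _ (by positivity)
          apply pow_le_pow_right₀ one_le_two
          omega
  -- part 2
  have hpart2 : ((q:ℝ) + 1) * (M (a + n + 1) * 2 ^ a / (Nat.factorial a : ℝ)) ≤
      ((q:ℝ) + 1) * (2 ^ (2*a + 2*n + 1) * (F * τ)) := by
    apply mul_le_mul_of_nonneg_left _ (by positivity)
    have hfm : ((a + n + 1).factorial : ℝ) =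
        ((a + n + 1).choose (n + 1) : ℝ) * ((n + 1).factorial : ℝ) * (Nat.factorial a : ℝ) := by
      have h' := Nat.choose_mul_factorial_mul_factorial
        (show n + 1 ≤ a + n + 1 by omega)
      have h'' : a + n + 1 - (n + 1) = a := by omega
      rw [h''] at h'
      exact_mod_cast h'.symm
    have hapos : (0:ℝ) < (Nat.factorial a : ℝ) := by positivity
    have hMm : M (a + n + 1) ≤ ((a + n + 1).factorial : ℝ) * τ := hMle _ hmle
    calc M (a + n + 1) * 2 ^ a / (Nat.factorial a : ℝ)
        ≤ ((a + n + 1).factorial : ℝ) * τ * 2 ^ a / (Nat.factorial a : ℝ) := by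
          apply div_le_div_of_nonneg_right _ hapos.le
          exact mul_le_mul_of_nonneg_right hMm (by positivity)
      _ = ((a + n + 1).choose (n + 1) : ℝ) * ((n + 1).factorial : ℝ) * τ * 2 ^ a := by
          rw [div_eq_iff (ne_of_gt hapos), hfm]; ring
      _ ≤ 2 ^ (a + n + 1) * (((n:ℝ) + 1) * F) * τ * 2 ^ a := by
          apply mul_le_mul_of_nonneg_right _ (by positivity)
          apply mul_le_mul_of_nonneg_right _ hτpos.le
          have h1 : ((a + n + 1).choose (n + 1) : ℝ) ≤ 2 ^ (a + n + 1) :=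
            nat_choose_le_two_pow _ _
          have h2 : ((n + 1).factorial : ℝ) = ((n:ℝ) + 1) * F := by
            rw [hF, Nat.factorial_succ]; push_cast; ring
          rw [h2]
          exact mul_le_mul_of_nonneg_right h1 (by positivity)
      _ ≤ 2 ^ (a + n + 1) * ((2:ℝ) ^ n * F) * τ * 2 ^ a := by
          have hn2 : ((n:ℝ) + 1) ≤ 2 ^ n := by
            exact_mod_cast Nat.lt_two_pow_self (n := n)
          apply mul_le_mul_of_nonneg_right _ (by positivity : (0:ℝ) ≤ 2 ^ a)
          apply mul_le_mul_of_nonneg_right _ hτpos.le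
          apply mul_le_mul_of_nonneg_left _ (by positivity : (0:ℝ) ≤ 2 ^ (a + n + 1))
          exact mul_le_mul_of_nonneg_right hn2 hFpos.le
      _ = 2 ^ (2*a + 2*n + 1) * (F * τ) := by
          rw [show 2*a + 2*n + 1 = (a + n + 1) + n + a by omega]
          rw [pow_add, pow_add]
          ring
  -- combine
  have hRHS : 2 * (((q:ℝ) + 1) + 1) * ((4:ℝ) ^ (q + 1)) ^ n * (F * τ)
      = (2 ^ (2*a + 2*n + 1) * (F * τ)) + ((q:ℝ) + 1) * (2 ^ (2*a + 2*n + 1) * (F * τ)) := by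
    have h4 : ((4:ℝ) ^ (q + 1)) ^ n = 2 ^ (2*a + 2*n) := by
      rw [← pow_mul, show (4:ℝ) = 2 ^ 2 by norm_num, ← pow_mul]
      congr 1
      rw [ha]; ring
    rw [h4, show 2*a + 2*n + 1 = (2*a + 2*n) + 1 by omega, pow_succ]
    ring
  have hcast : ((q + 1 : ℕ) : ℝ) = (q:ℝ) + 1 := by push_cast; ring
  rw [hcast]
  rw [hRHS]
  exact add_le_add hpart1 hpart2
end

section
/- Let M be a positive sequence with (M_n/n!)_{n≥0} non-decreasing, k > 1 an integer, and g ∈ C^∞(0,1] with |g^{(n)}(x)| ≤ M_n / x^{(1-1/k)n} for all n ≥ 0 and x ∈ (0,1]. Set f(x) = g(x^k). Then there exist constants A, C > 0 such that |f^{(n)}(x)| ≤ A C^n M_n for all x ∈ (0,1] when k does not divide n or n = 0, and |f^{(n)}(x)| ≤ A C^n M_n (1 + log(1/x)) when k divides n. -/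
set_option maxHeartbeats 1000000

open Set Finset intervalIntegral



noncomputable def psfCoef (k : ℕ) : ℕ → ℕ → ℝ
  | 0, m => if m = 0 then 1 else 0
  | (n+1), m =>
      ((k * m : ℝ) - n) * psfCoef k n m + k * (if m = 0 then 0 else psfCoef k n (m - 1))

lemma psfCoef_eq_zero (k : ℕ) (hk : 1 ≤ k) :
    ∀ n m : ℕ, (k * m < n ∨ n < m) → psfCoef k n m = 0 := by
  intro n
  induction n with
  | zero =>
    intro m hm
    rcases hm with h | h
    · omega
    · have hne : ¬ m = 0 := by omega
      simp [psfCoef, hne]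
  | succ n ih =>
    intro m hm
    rcases m with _ | m'
    · -- m = 0, so k*0 = 0 < n+1 always; need (0-n)*c n 0 = 0
      rcases Nat.eq_zero_or_pos n with h0 | h0
      · simp [psfCoef, h0]
      · simp [psfCoef, ih 0 (Or.inl (by omega))]
    · rcases hm with h | h
      · -- k*(m'+1) < n+1, i.e. k*(m'+1) ≤ n
        have h1 : k * m' < n := by
          have h2 : k * (m'+1) ≤ n := by omega
          rw [Nat.mul_succ] at h2; omega
        have h2 : psfCoef k n m' = 0 := ih m' (Or.inl h1)
        rcases eq_or_lt_of_le (by omega : k * (m'+1) ≤ n) with he | hlt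
        · simp [psfCoef, h2, he]
          left
          push_cast [← he]
          ring
        · simp [psfCoef, h2, ih (m'+1) (Or.inl hlt)]
      · have h1 : psfCoef k n (m'+1) = 0 := ih _ (Or.inr (by omega))
        have h2 : psfCoef k n m' = 0 := ih _ (Or.inr (by omega))
        simp [psfCoef, h1, h2]

lemma psfCoef_abs_le (k : ℕ) (hk : 1 ≤ k) :
    ∀ n m : ℕ, |psfCoef k n m| ≤ ((n.factorial : ℝ) / m.factorial) * (2*k)^n := by
  intro n
  induction n with
  | zero =>
    intro m
    rcases Nat.eq_zero_or_pos m with h | h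
    · simp [psfCoef, h]
    · rw [psfCoef_eq_zero k hk 0 m (Or.inr h)]
      simp only [abs_zero]
      positivity
  | succ n ih =>
    intro m
    have hfm : (0:ℝ) < m.factorial := by positivity
    have hfn : (0:ℝ) < n.factorial := by positivity
    have key1 : |((k * m : ℝ) - n) * psfCoef k n m| ≤
        (k * (n+1)) * (((n.factorial : ℝ) / m.factorial) * (2*k)^n) := by
      by_cases hmn : m ≤ n
      · rw [abs_mul]
        apply mul_le_mul _ (ih m) (abs_nonneg _) (by positivity)
        rw [abs_sub_le_iff]
        constructor
        · have : (k*m : ℝ) ≤ k * n := by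
            have := Nat.mul_le_mul_left k hmn; exact_mod_cast this
          nlinarith [(by exact_mod_cast hk : (1:ℝ) ≤ (k:ℝ)), (by positivity : (0:ℝ) ≤ (n:ℝ))]
        · nlinarith [(by exact_mod_cast hk : (1:ℝ) ≤ (k:ℝ)), (by positivity : (0:ℝ) ≤ (n:ℝ)),
            (by positivity : (0:ℝ) ≤ (k*m : ℝ))]
      · rw [psfCoef_eq_zero k hk n m (Or.inr (by omega))]
        simp
        positivity
    have key2 : |(k : ℝ) * (if m = 0 then 0 else psfCoef k n (m-1))| ≤
        (k * (n+1)) * (((n.factorial : ℝ) / m.factorial) * (2*k)^n) := by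
      rcases m with _ | m'
      · simp; positivity
      · simp only [Nat.succ_ne_zero, if_neg, Nat.add_sub_cancel, reduceIte]
        by_cases hmn : m' ≤ n
        · rw [abs_mul, abs_of_nonneg (by positivity : (0:ℝ) ≤ (k:ℝ))]
          have h1 : (k:ℝ) * |psfCoef k n m'| ≤ (k:ℝ) * (((n.factorial : ℝ) / m'.factorial) * (2*k)^n) :=
            mul_le_mul_of_nonneg_left (ih m') (by positivity)
          refine h1.trans ?_
          have hm'f : ((n.factorial : ℝ) / m'.factorial) = (m'+1) * ((n.factorial : ℝ) / (m'+1).factorial) := by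
            rw [Nat.factorial_succ]
            push_cast
            field_simp
          rw [hm'f]
          have : (m' + 1 : ℝ) ≤ (n + 1 : ℝ) := by exact_mod_cast Nat.succ_le_succ hmn
          have hnn : (0:ℝ) ≤ ((n.factorial : ℝ) / (m'+1).factorial) * (2*k)^n := by positivity
          calc (k:ℝ) * ((m'+1) * ((n.factorial : ℝ) / (m'+1).factorial) * (2*k)^n)
              = (k * (m'+1)) * (((n.factorial : ℝ) / (m'+1).factorial) * (2*k)^n) := by ring
            _ ≤ (k * (n+1)) * (((n.factorial : ℝ) / (m'+1).factorial) * (2*k)^n) := by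
                apply mul_le_mul_of_nonneg_right _ hnn
                apply mul_le_mul_of_nonneg_left _ (by positivity)
                exact this
        · rw [psfCoef_eq_zero k hk n m' (Or.inr (by omega))]
          simp; positivity
    calc |psfCoef k (n+1) m| ≤ |((k * m : ℝ) - n) * psfCoef k n m| +
          |(k : ℝ) * (if m = 0 then 0 else psfCoef k n (m-1))| := by
          rw [psfCoef]; exact abs_add_le _ _
      _ ≤ (k * (n+1)) * (((n.factorial : ℝ) / m.factorial) * (2*k)^n)
          + (k * (n+1)) * (((n.factorial : ℝ) / m.factorial) * (2*k)^n) := add_le_add key1 key2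
      _ ≤ ((n+1).factorial : ℝ) / m.factorial * (2*k)^(n+1) := by
          rw [Nat.factorial_succ]
          push_cast
          rw [pow_succ]
          exact le_of_eq (by ring)

lemma psf_hasDerivWithinAt (g : ℝ → ℝ) (hg : ContDiffOn ℝ (⊤ : ℕ∞) g (Set.Ioc 0 1)) (m : ℕ)
    {y : ℝ} (hy : y ∈ Set.Ioc (0:ℝ) 1) :
    HasDerivWithinAt (iteratedDerivWithin m g (Set.Ioc 0 1))
      (iteratedDerivWithin (m+1) g (Set.Ioc 0 1) y) (Set.Ioc 0 1) y := by
  have hd : DifferentiableOn ℝ (iteratedDerivWithin m g (Set.Ioc 0 1)) (Set.Ioc 0 1) :=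
    hg.differentiableOn_iteratedDerivWithin (by exact_mod_cast lt_top_iff_ne_top.mpr (by simp))
      (uniqueDiffOn_Ioc 0 1)
  have := (hd y hy).hasDerivWithinAt
  rwa [← iteratedDerivWithin_succ] at this

lemma psf_formula (k : ℕ) (hk : 1 ≤ k) (g : ℝ → ℝ)
    (hg : ContDiffOn ℝ (⊤ : ℕ∞) g (Set.Ioc 0 1)) :
    ∀ n : ℕ, ∀ x ∈ Set.Ioc (0:ℝ) 1,
    iteratedDerivWithin n (fun y => g (y ^ k)) (Set.Ioc 0 1) x =
      ∑ m ∈ Finset.range (n+1), psfCoef k n m * x ^ ((k*m : ℤ) - n) *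
        iteratedDerivWithin m g (Set.Ioc 0 1) (x ^ k) := by
  have hmaps : MapsTo (fun y : ℝ => y ^ k) (Set.Ioc 0 1) (Set.Ioc 0 1) := by
    intro y hy
    exact ⟨pow_pos hy.1 k, pow_le_one₀ hy.1.le hy.2⟩
  intro n
  induction n with
  | zero =>
    intro x hx
    simp only [iteratedDerivWithin_zero, zero_add, Finset.range_one, Finset.sum_singleton]
    simp [psfCoef]
  | succ n ih =>
    intro x hx
    have hx0 : x ≠ 0 := ne_of_gt hx.1
    have hU := uniqueDiffOn_Ioc (0:ℝ) 1
    -- derivative of each term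
    have hterm : ∀ m : ℕ, HasDerivWithinAt
        (fun y : ℝ => psfCoef k n m * y ^ ((k*m : ℤ) - n) *
          iteratedDerivWithin m g (Set.Ioc 0 1) (y ^ k))
        (psfCoef k n m * ((((k*m : ℤ) - n : ℤ) : ℝ) * x ^ ((k*m : ℤ) - n - 1)) *
            iteratedDerivWithin m g (Set.Ioc 0 1) (x ^ k)
          + psfCoef k n m * x ^ ((k*m : ℤ) - n) *
            (iteratedDerivWithin (m+1) g (Set.Ioc 0 1) (x ^ k) * ((k : ℝ) * x ^ (k-1))))
        (Set.Ioc 0 1) x := by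
      intro m
      have hz : HasDerivWithinAt (fun y : ℝ => y ^ ((k*m : ℤ) - n))
          ((((k*m : ℤ) - n : ℤ) : ℝ) * x ^ ((k*m : ℤ) - n - 1)) (Set.Ioc 0 1) x :=
        (hasDerivAt_zpow _ x (Or.inl hx0)).hasDerivWithinAt
      have hpow : HasDerivWithinAt (fun y : ℝ => y ^ k) ((k : ℝ) * x ^ (k-1)) (Set.Ioc 0 1) x :=
        (hasDerivAt_pow k x).hasDerivWithinAt
      have hcomp : HasDerivWithinAt
          (fun y : ℝ => iteratedDerivWithin m g (Set.Ioc 0 1) (y ^ k))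
          (iteratedDerivWithin (m+1) g (Set.Ioc 0 1) (x ^ k) * ((k : ℝ) * x ^ (k-1)))
          (Set.Ioc 0 1) x :=
        (psf_hasDerivWithinAt g hg m (hmaps hx)).comp x hpow hmaps
      exact (hz.const_mul (psfCoef k n m)).mul hcomp
    have hsum := HasDerivWithinAt.fun_sum (fun m (_ : m ∈ Finset.range (n+1)) => hterm m)
    rw [iteratedDerivWithin_succ,
      derivWithin_congr (fun y hy => ih y hy) (ih x hx),
      hsum.derivWithin (hU x hx)]
    -- now pure algebra
    have hGsplit : ∀ m ∈ Finset.range (n+1),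
        (psfCoef k n m * ((((k*m : ℤ) - n : ℤ) : ℝ) * x ^ ((k*m : ℤ) - n - 1)) *
            iteratedDerivWithin m g (Set.Ioc 0 1) (x ^ k)
          + psfCoef k n m * x ^ ((k*m : ℤ) - n) *
            (iteratedDerivWithin (m+1) g (Set.Ioc 0 1) (x ^ k) * ((k : ℝ) * x ^ (k-1))))
        = (((k*m : ℝ) - n) * psfCoef k n m) * x ^ ((k*m : ℤ) - (n+1)) *
            iteratedDerivWithin m g (Set.Ioc 0 1) (x ^ k)
          + ((k : ℝ) * psfCoef k n m) * x ^ ((k*(m+1) : ℤ) - (n+1)) *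
            iteratedDerivWithin (m+1) g (Set.Ioc 0 1) (x ^ k) := by
      intro m _
      have he1 : ((k*m : ℤ) - n - 1) = ((k*m : ℤ) - (n+1)) := by ring
      have he2 : x ^ ((k*m : ℤ) - n) * x ^ (k-1) = x ^ ((k*(m+1) : ℤ) - (n+1)) := by
        rw [← zpow_natCast x (k-1), ← zpow_add₀ hx0]
        congr 1
        have : ((k - 1 : ℕ) : ℤ) = (k : ℤ) - 1 := by
          exact_mod_cast Int.ofNat_sub hk
        rw [this]
        push_cast
        ring
      rw [he1, ← he2]
      push_cast
      ring
    rw [Finset.sum_congr rfl hGsplit, Finset.sum_add_distrib]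
    -- RHS: expand psfCoef (n+1)
    have hR : ∀ m ∈ Finset.range (n+2),
        psfCoef k (n+1) m * x ^ ((k*m : ℤ) - (n+1)) *
          iteratedDerivWithin m g (Set.Ioc 0 1) (x ^ k)
        = (((k*m : ℝ) - n) * psfCoef k n m) * x ^ ((k*m : ℤ) - (n+1)) *
            iteratedDerivWithin m g (Set.Ioc 0 1) (x ^ k)
          + ((k : ℝ) * (if m = 0 then 0 else psfCoef k n (m-1))) * x ^ ((k*m : ℤ) - (n+1)) *
            iteratedDerivWithin m g (Set.Ioc 0 1) (x ^ k) := by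
      intro m _
      rw [psfCoef]
      ring
    push_cast
    rw [Finset.sum_congr rfl hR, Finset.sum_add_distrib]
    congr 1
    · -- first sums: range (n+2) has extra vanishing top term
      conv_rhs => rw [Finset.sum_range_succ]
      rw [psfCoef_eq_zero k hk n (n+1) (Or.inr (by omega))]
      simp
    · -- second sums: shift index
      rw [Finset.sum_range_succ' (fun m => ((k : ℝ) * (if m = 0 then 0 else psfCoef k n (m-1))) *
          x ^ ((k*m : ℤ) - (n+1)) * iteratedDerivWithin m g (Set.Ioc 0 1) (x ^ k)) (n+1)]
      simp only [Nat.add_sub_cancel, Nat.succ_ne_zero, if_neg, reduceIte, Nat.cast_ofNat,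
        mul_zero, zero_mul, add_zero]
      rfl


-- ambient assumptions as section variables
lemma psf_hasDerivWithinAt' (g : ℝ → ℝ) (hg : ContDiffOn ℝ (⊤ : ℕ∞) g (Set.Ioc 0 1)) (m : ℕ)
    {y : ℝ} (hy : y ∈ Set.Ioc (0:ℝ) 1) :
    HasDerivWithinAt (iteratedDerivWithin m g (Set.Ioc 0 1))
      (iteratedDerivWithin (m+1) g (Set.Ioc 0 1) y) (Set.Ioc 0 1) y := by
  have hd : DifferentiableOn ℝ (iteratedDerivWithin m g (Set.Ioc 0 1)) (Set.Ioc 0 1) :=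
    hg.differentiableOn_iteratedDerivWithin (by exact_mod_cast lt_top_iff_ne_top.mpr (by simp))
      (uniqueDiffOn_Ioc 0 1)
  have := (hd y hy).hasDerivWithinAt
  rwa [← iteratedDerivWithin_succ] at this

/-- Taylor expansion at base point 1 with integral remainder. -/
lemma psf_taylor (g : ℝ → ℝ) (hg : ContDiffOn ℝ (⊤ : ℕ∞) g (Set.Ioc 0 1)) (m r : ℕ) (hr : 1 ≤ r) {y : ℝ} (hy : y ∈ Set.Ioc (0:ℝ) 1) :
    iteratedDerivWithin m g (Set.Ioc 0 1) y =
      (∑ j ∈ Finset.range r, iteratedDerivWithin (m+j) g (Set.Ioc 0 1) 1 * (y-1)^j / j.factorial)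
      - ∫ t in y..1, iteratedDerivWithin (m+r) g (Set.Ioc 0 1) t * (y-t)^(r-1) / (r-1).factorial := by
  set G : ℕ → ℝ → ℝ := fun j => iteratedDerivWithin j g (Set.Ioc 0 1) with hG
  set F : ℝ → ℝ := fun s => ∑ j ∈ Finset.range r, G (m+j) s * (y-s)^j / j.factorial with hF
  set w : ℝ → ℕ → ℝ := fun t j => if j = 0 then 0 else G (m+j) t * (y-t)^(j-1) / (j-1).factorial
    with hw
  have hFderiv : ∀ t ∈ Set.Ioc (0:ℝ) 1,
      HasDerivWithinAt F (G (m+r) t * (y-t)^(r-1) / (r-1).factorial) (Set.Ioc 0 1) t := by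
    intro t ht
    have hterm : ∀ j : ℕ, HasDerivWithinAt (fun s => G (m+j) s * (y-s)^j / j.factorial)
        (w t (j+1) - w t j) (Set.Ioc 0 1) t := by
      intro j
      have hpoly : HasDerivAt (fun s : ℝ => (y - s)^j) ((j:ℝ) * (y-t)^(j-1) * (-1)) t := by
        have h1 : HasDerivAt (fun s : ℝ => y - s) (-1) t := (hasDerivAt_id t).const_sub y
        exact (hasDerivAt_pow j (y - t)).comp t h1
      have hmul := (psf_hasDerivWithinAt' g hg (m+j) ht).mul hpoly.hasDerivWithinAt
      have := hmul.div_const (j.factorial : ℝ)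
      refine this.congr_deriv (Eq.symm ?_)
      rcases j with _ | j'
      · simp [hw, hG]
      · simp only [hw, hG, Nat.succ_ne_zero, if_neg, reduceIte, Nat.add_sub_cancel]
        have hfact : ((j'+1).factorial : ℝ) = (j'+1) * j'.factorial := by
          rw [Nat.factorial_succ]; push_cast; ring
        rw [hfact]
        have h0 : (j'.factorial : ℝ) ≠ 0 := by positivity
        field_simp
        push_cast
        ring
    have hsum := HasDerivWithinAt.fun_sum (fun j (_ : j ∈ Finset.range r) => hterm j)
    have htel : ∑ j ∈ Finset.range r, (w t (j+1) - w t j) = w t r := by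
      rw [Finset.sum_range_sub (w t)]
      simp [hw]
    rw [htel] at hsum
    have : w t r = G (m+r) t * (y-t)^(r-1) / (r-1).factorial := by
      simp [hw, Nat.one_le_iff_ne_zero.mp hr]
    rwa [this] at hsum
  have hsub : Set.Icc y 1 ⊆ Set.Ioc (0:ℝ) 1 := fun t htt => ⟨lt_of_lt_of_le hy.1 htt.1, htt.2⟩
  have hcontF : ContinuousOn F (Set.Icc y 1) :=
    fun t ht => ((hFderiv t (hsub ht)).continuousWithinAt).mono hsub
  have hcontG : ContinuousOn (G (m+r)) (Set.Ioc 0 1) :=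
    hg.continuousOn_iteratedDerivWithin (by exact_mod_cast le_top) (uniqueDiffOn_Ioc 0 1)
  have hcontF' : ContinuousOn
      (fun t => G (m+r) t * (y-t)^(r-1) / (r-1).factorial) (Set.Icc y 1) := by
    apply ContinuousOn.div_const
    exact (hcontG.mono hsub).mul (Continuous.continuousOn (by fun_prop))
  have hftc := integral_eq_sub_of_hasDeriv_right_of_le hy.2
    hcontF
    (fun t ht => by
      have htmem : t ∈ Set.Ioc (0:ℝ) 1 := ⟨lt_trans hy.1 ht.1, le_of_lt ht.2⟩
      have hnhds : Set.Ioc (0:ℝ) 1 ∈ nhds t := Ioc_mem_nhds htmem.1 ht.2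
      exact (((hFderiv t htmem).hasDerivAt hnhds).hasDerivWithinAt))
    (hcontF'.intervalIntegrable_of_Icc hy.2)
  -- F y = G m y, F 1 = taylor sum
  have hFy : F y = G m y := by
    have h1 : F y = ∑ j ∈ Finset.range r, G (m+j) y * (y-y)^j / j.factorial := rfl
    rw [h1, Finset.sum_eq_single 0]
    · simp
    · intro j _ hj
      simp [zero_pow hj]
    · intro h; simp at h; omega
  have hF1 : F 1 = ∑ j ∈ Finset.range r, G (m+j) 1 * (y-1)^j / j.factorial := rfl
  show G m y = (∑ j ∈ Finset.range r, G (m+j) 1 * (y-1)^j / j.factorial)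
      - ∫ t in y..1, G (m+r) t * (y-t)^(r-1) / (r-1).factorial
  rw [← hFy, ← hF1, hftc]
  ring


lemma psf_choose_le (i j : ℕ) : i.choose j ≤ 2^i := by
  rcases le_or_gt j i with h | h
  · calc i.choose j ≤ ∑ l ∈ Finset.range (i+1), i.choose l :=
        Finset.single_le_sum (fun _ _ => Nat.zero_le _) (Finset.mem_range.mpr (by omega))
      _ = 2^i := Nat.sum_range_choose i
  · simp [Nat.choose_eq_zero_of_lt h]

lemma psf_two_two (n : ℕ) : (2:ℝ)^n * 2^n = 4^n := by rw [← mul_pow]; norm_num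

lemma psf_gbound (M : ℕ → ℝ) (hM : ∀ n, 0 < M n)
    (hmono : Monotone fun n => M n / (Nat.factorial n : ℝ))
    (k : ℕ) (hk : 1 < k)
    (g : ℝ → ℝ) (hg : ContDiffOn ℝ (⊤ : ℕ∞) g (Set.Ioc 0 1))
    (hbound : ∀ n : ℕ, ∀ x ∈ Set.Ioc (0:ℝ) 1,
      |iteratedDerivWithin n g (Set.Ioc 0 1) x| ≤ M n / x ^ ((1 - 1/(k:ℝ)) * n))
    (n m : ℕ) (hm : m ≤ n) (hkm : n ≤ k*m) {y : ℝ} (hy : y ∈ Set.Ioc (0:ℝ) 1) :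
    (n.factorial : ℝ) / m.factorial * |iteratedDerivWithin m g (Set.Ioc 0 1) y| ≤
      ((k:ℝ)+1) * 4^n * M n *
        (if n = k*m then (1 + Real.log (1/y)) else y ^ ((n:ℝ)/k - m)) := by
  have hy0 : (0:ℝ) < y := hy.1
  have hy1 : y ≤ 1 := hy.2
  have hk0 : (0:ℝ) < k := by positivity
  have hkR : (1:ℝ) < k := by exact_mod_cast hk
  have hlog : 0 ≤ Real.log (1/y) := Real.log_nonneg (by rw [le_div_iff₀ hy0]; linarith)
  have hMn := hM n
  have hexp_nonpos : (n:ℝ)/k - m ≤ 0 := by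
    rw [sub_nonpos, div_le_iff₀ hk0]
    have : (n:ℝ) ≤ (k*m : ℕ) := by exact_mod_cast hkm
    push_cast at this; linarith
  have hyexp1 : 1 ≤ y ^ ((n:ℝ)/k - m) :=
    Real.one_le_rpow_of_pos_of_le_one_of_nonpos hy0 hy1 hexp_nonpos
  have hyexp0 : 0 < y ^ ((n:ℝ)/k - m) := Real.rpow_pos_of_pos hy0 _
  rcases eq_or_lt_of_le hm with heq | hlt
  · -- m = n
    subst heq
    rw [div_self (by positivity), one_mul]
    have h1 := hbound m y hy
    have h2 : M m / y ^ ((1 - 1/(k:ℝ)) * m) = M m * y ^ ((m:ℝ)/k - m) := by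
      rw [div_eq_mul_inv, ← Real.rpow_neg hy0.le]
      congr 1
      ring
    rw [h2] at h1
    have h4 : (1:ℝ) ≤ 4^m := one_le_pow₀ (by norm_num)
    by_cases hc : m = k*m
    · have hm0 : m = 0 := by nlinarith [hc, hk]
      subst hm0
      rw [if_pos hc]
      simp only [Nat.cast_zero, zero_div, zero_sub, neg_zero, Real.rpow_zero, mul_one] at h1
      have hfac : (1:ℝ) ≤ ((k:ℝ)+1)*(1+Real.log (1/y)) := by nlinarith
      calc |iteratedDerivWithin 0 g (Set.Ioc 0 1) y| ≤ M 0 := by simpa using h1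
        _ = M 0 * 1 := (mul_one _).symm
        _ ≤ M 0 * (((k:ℝ)+1)*(1+Real.log (1/y))) := mul_le_mul_of_nonneg_left hfac (hM 0).le
        _ = ((k:ℝ)+1) * 4^0 * M 0 * (1 + Real.log (1/y)) := by ring
    · rw [if_neg hc]
      have hco : (1:ℝ) ≤ ((k:ℝ)+1)*4^m := by nlinarith
      calc |iteratedDerivWithin m g (Set.Ioc 0 1) y| ≤ M m * y ^ ((m:ℝ)/k - m) := h1
        _ = 1 * (M m * y ^ ((m:ℝ)/k - m)) := (one_mul _).symm
        _ ≤ (((k:ℝ)+1)*4^m) * (M m * y ^ ((m:ℝ)/k - m)) :=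
            mul_le_mul_of_nonneg_right hco (by positivity)
        _ = ((k:ℝ)+1) * 4^m * M m * y ^ ((m:ℝ)/k - m) := by ring
  · -- m < n : Taylor expansion
    set r := n - m with hrdef
    have hr1 : 1 ≤ r := by omega
    have hmr : m + r = n := by omega
    have htay := psf_taylor g hg m r hr1 hy
    rw [hmr] at htay
    have hrR : ((r:ℝ)) = (n:ℝ) - m := by
      rw [hrdef]; push_cast [Nat.cast_sub hm]; ring
    have hr1R : (((r-1:ℕ)):ℝ) = (n:ℝ) - m - 1 := by
      push_cast [Nat.cast_sub hr1]; linarith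
    have hT0 : (0:ℝ) < (n.factorial : ℝ) / m.factorial := by positivity
    have h2n : ((n:ℝ)) ≤ 2^n := by exact_mod_cast (n.lt_two_pow_self).le
    -- fraction bound : n! / m! / (r-1)! ≤ 4^n
    have hfrac : (n.factorial : ℝ) / m.factorial / (r-1).factorial ≤ 4^n := by
      have hrfac : (r.factorial : ℝ) = r * (r-1).factorial := by
        rcases r with _ | r'
        · omega
        · simp [Nat.factorial_succ]
      have hch : ((n.choose m : ℕ) : ℝ) = n.factorial / (m.factorial * r.factorial) := by
        rw [Nat.cast_choose ℝ hm]
      have hchle : ((n.choose m : ℕ) : ℝ) ≤ 2^n := by exact_mod_cast psf_choose_le n m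
      have hrn : ((r:ℝ)) ≤ (n:ℝ) := by
        rw [hrR]
        have hm0 : (0:ℝ) ≤ m := by positivity
        linarith
      have hkey : (n.factorial : ℝ) / m.factorial / (r-1).factorial = r * (n.choose m) := by
        rw [hch]
        have hr0 : (0:ℝ) < r := by exact_mod_cast hr1
        field_simp [hrfac]
        rw [hrfac]; ring
      rw [hkey]
      calc (r:ℝ) * (n.choose m)
          ≤ (n:ℝ) * 2^n := mul_le_mul hrn hchle (by positivity) (by positivity)
        _ ≤ 2^n * 2^n := by nlinarith [pow_pos (show (0:ℝ) < 2 by norm_num) n]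
        _ = 4^n := psf_two_two n
    -- polynomial part
    have hterm : ∀ j ∈ Finset.range r,
        (n.factorial : ℝ) / m.factorial *
          |iteratedDerivWithin (m+j) g (Set.Ioc 0 1) 1 * (y-1)^j / j.factorial|
        ≤ 2^n * M n := by
      intro j hj
      have hjr : j < r := Finset.mem_range.mp hj
      have hmjn : m + j ≤ n := by omega
      have hb1 : |iteratedDerivWithin (m+j) g (Set.Ioc 0 1) 1| ≤ M (m+j) := by
        have := hbound (m+j) 1 ⟨one_pos, le_refl 1⟩
        rwa [Real.one_rpow, div_one] at this
      have hMm : M (m+j) ≤ M n * (m+j).factorial / n.factorial := by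
        have h := hmono hmjn
        simp only at h
        rw [div_le_div_iff₀ (by positivity) (by positivity)] at h
        rw [le_div_iff₀ (by positivity)]
        linarith
      have hy1abs : |y - 1| ≤ 1 := by
        rw [abs_sub_comm, abs_of_nonneg (by linarith)]; linarith
      have habs : |iteratedDerivWithin (m+j) g (Set.Ioc 0 1) 1 * (y-1)^j / j.factorial|
          ≤ M (m+j) / j.factorial := by
        rw [abs_div, abs_mul, abs_pow, abs_of_nonneg (show (0:ℝ) ≤ j.factorial by positivity)]
        gcongr
        calc |iteratedDerivWithin (m+j) g (Set.Ioc 0 1) 1| * |y-1|^j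
            ≤ M (m+j) * 1 :=
              mul_le_mul hb1 (pow_le_one₀ (abs_nonneg _) hy1abs) (by positivity) (hM _).le
          _ = M (m+j) := mul_one _
      calc (n.factorial : ℝ) / m.factorial *
            |iteratedDerivWithin (m+j) g (Set.Ioc 0 1) 1 * (y-1)^j / j.factorial|
          ≤ (n.factorial : ℝ) / m.factorial * (M (m+j) / j.factorial) := by
            exact mul_le_mul_of_nonneg_left habs hT0.le
        _ ≤ (n.factorial : ℝ) / m.factorial * ((M n * (m+j).factorial / n.factorial) / j.factorial) := by
            gcongr
        _ = M n * ((m+j).choose j) := by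
            rw [Nat.cast_choose ℝ (Nat.le_add_left j m)]
            have : m + j - j = m := by omega
            rw [this]
            field_simp
        _ ≤ M n * 2^n := by
            have h1 : (((m+j).choose j : ℕ) : ℝ) ≤ 2^(m+j) := by exact_mod_cast psf_choose_le (m+j) j
            have h2 : (2:ℝ)^(m+j) ≤ 2^n := pow_le_pow_right₀ (by norm_num) hmjn
            nlinarith
        _ = 2^n * M n := mul_comm _ _
    have hpoly : (n.factorial : ℝ) / m.factorial *
        |∑ j ∈ Finset.range r, iteratedDerivWithin (m+j) g (Set.Ioc 0 1) 1 * (y-1)^j / j.factorial|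
        ≤ 4^n * M n := by
      calc (n.factorial : ℝ) / m.factorial *
            |∑ j ∈ Finset.range r, iteratedDerivWithin (m+j) g (Set.Ioc 0 1) 1 * (y-1)^j / j.factorial|
          ≤ (n.factorial : ℝ) / m.factorial *
            ∑ j ∈ Finset.range r, |iteratedDerivWithin (m+j) g (Set.Ioc 0 1) 1 * (y-1)^j / j.factorial| :=
            mul_le_mul_of_nonneg_left (Finset.abs_sum_le_sum_abs _ _) hT0.le
        _ = ∑ j ∈ Finset.range r, (n.factorial : ℝ) / m.factorial *
            |iteratedDerivWithin (m+j) g (Set.Ioc 0 1) 1 * (y-1)^j / j.factorial| := by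
            rw [Finset.mul_sum]
        _ ≤ ∑ j ∈ Finset.range r, (2:ℝ)^n * M n := Finset.sum_le_sum hterm
        _ = r * ((2:ℝ)^n * M n) := by rw [Finset.sum_const, Finset.card_range]; ring
        _ ≤ 2^n * ((2:ℝ)^n * M n) := by
            have hrn : ((r:ℝ)) ≤ 2^n := by
              rw [hrR]
              have hm0 : (0:ℝ) ≤ m := by positivity
              linarith
            exact mul_le_mul_of_nonneg_right hrn (by positivity)
        _ = 4^n * M n := by rw [← mul_assoc, psf_two_two]
    -- integral part
    set e' : ℝ := (((r-1:ℕ)):ℝ) - (1 - 1/(k:ℝ))*n with he'def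
    have hsub : Set.Icc y 1 ⊆ Set.Ioc (0:ℝ) 1 := fun t ht => ⟨lt_of_lt_of_le hy0 ht.1, ht.2⟩
    have hGncont : ContinuousOn (iteratedDerivWithin n g (Set.Ioc 0 1)) (Set.Ioc 0 1) :=
      hg.continuousOn_iteratedDerivWithin (by exact_mod_cast le_top) (uniqueDiffOn_Ioc 0 1)
    have hfc : ContinuousOn
        (fun t => iteratedDerivWithin n g (Set.Ioc 0 1) t * (y-t)^(r-1) / (r-1).factorial)
        (Set.Icc y 1) :=
      ((hGncont.mono hsub).mul (Continuous.continuousOn (by fun_prop))).div_const _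
    have hφc : ContinuousOn (fun t : ℝ => M n / (r-1).factorial * t ^ e') (Set.Icc y 1) := by
      apply ContinuousOn.mul continuousOn_const
      exact ContinuousOn.rpow_const continuousOn_id
        (fun t ht => Or.inl (ne_of_gt (lt_of_lt_of_le hy0 ht.1)))
    have hptwise : ∀ t ∈ Set.Icc y 1,
        |iteratedDerivWithin n g (Set.Ioc 0 1) t * (y-t)^(r-1) / (r-1).factorial|
        ≤ M n / (r-1).factorial * t ^ e' := by
      intro t ht
      have ht0 : 0 < t := lt_of_lt_of_le hy0 ht.1
      have ht1 : t ≤ 1 := ht.2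
      have h3 := hbound n t ⟨ht0, ht1⟩
      have h1 : |y - t| ≤ t := by
        rw [abs_sub_comm, abs_of_nonneg (by linarith [ht.1])]
        linarith [hy0]
      have h2 : |y-t|^(r-1) ≤ t^(r-1) := pow_le_pow_left₀ (abs_nonneg _) h1 _
      have hrw : (M n / t ^ ((1 - 1/(k:ℝ))*n)) * t^(r-1) / (r-1).factorial
          = M n / (r-1).factorial * t ^ e' := by
        rw [he'def, Real.rpow_sub ht0, Real.rpow_natCast]
        have hta : (0:ℝ) < t ^ ((1 - 1/(k:ℝ))*n) := Real.rpow_pos_of_pos ht0 _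
        field_simp
      rw [abs_div, abs_mul, abs_pow, abs_of_nonneg (show (0:ℝ) ≤ (r-1).factorial by positivity),
        ← hrw]
      gcongr
    have hIabs : |∫ t in y..1, iteratedDerivWithin n g (Set.Ioc 0 1) t * (y-t)^(r-1) / (r-1).factorial|
        ≤ M n / (r-1).factorial * ∫ t in y..1, t ^ e' := by
      calc |∫ t in y..1, iteratedDerivWithin n g (Set.Ioc 0 1) t * (y-t)^(r-1) / (r-1).factorial|
          ≤ ∫ t in y..1, |iteratedDerivWithin n g (Set.Ioc 0 1) t * (y-t)^(r-1) / (r-1).factorial| :=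
            abs_integral_le_integral_abs hy1
        _ ≤ ∫ t in y..1, M n / (r-1).factorial * t ^ e' :=
            integral_mono_on hy1 ((hfc.abs).intervalIntegrable_of_Icc hy1)
              (hφc.intervalIntegrable_of_Icc hy1) hptwise
        _ = M n / (r-1).factorial * ∫ t in y..1, t ^ e' := integral_const_mul _ _
    have hTfrac : (n.factorial : ℝ) / m.factorial * (M n / (r-1).factorial) ≤ 4^n * M n := by
      have : (n.factorial : ℝ) / m.factorial * (M n / (r-1).factorial)
          = ((n.factorial : ℝ) / m.factorial / (r-1).factorial) * M n := by ring
      rw [this]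
      exact mul_le_mul_of_nonneg_right hfrac hMn.le
    -- split on whether n = k*m
    by_cases hc : n = k*m
    · -- e' = -1, integral is log (1/y)
      rw [if_pos hc]
      have hnm : (n:ℝ) = (k:ℝ)*m := by exact_mod_cast hc
      have hnk : (n:ℝ)/k = m := by rw [div_eq_iff (ne_of_gt hk0), hnm]; ring
      have he' : e' = -1 := by
        rw [he'def, hr1R]
        have hexpand : (1 - 1/(k:ℝ))*n = n - n/k := by
          field_simp
        rw [hexpand, hnk]
        ring
      have hintval : (∫ t in y..1, t ^ e') = Real.log (1/y) := by
        rw [he']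
        rw [intervalIntegral.integral_congr (g := fun t : ℝ => t⁻¹)
          (fun t ht => Real.rpow_neg_one t)]
        rw [integral_inv (by
          rw [Set.uIcc_of_le hy1]
          intro h
          exact absurd h.1 (not_le.mpr hy0))]
      calc (n.factorial : ℝ) / m.factorial * |iteratedDerivWithin m g (Set.Ioc 0 1) y|
          ≤ (n.factorial : ℝ) / m.factorial *
            (|∑ j ∈ Finset.range r, iteratedDerivWithin (m+j) g (Set.Ioc 0 1) 1 * (y-1)^j / j.factorial|
             + |∫ t in y..1, iteratedDerivWithin n g (Set.Ioc 0 1) t * (y-t)^(r-1) / (r-1).factorial|) := by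
            rw [htay]
            exact mul_le_mul_of_nonneg_left (abs_sub _ _) hT0.le
        _ ≤ 4^n * M n + (n.factorial : ℝ) / m.factorial * (M n / (r-1).factorial * Real.log (1/y)) := by
            rw [mul_add]
            apply add_le_add hpoly
            apply mul_le_mul_of_nonneg_left _ hT0.le
            rw [← hintval]
            exact hIabs
        _ ≤ 4^n * M n + 4^n * M n * Real.log (1/y) := by
            have := mul_le_mul_of_nonneg_right hTfrac hlog
            nlinarith [hTfrac, hlog]
        _ = 4^n * M n * (1 + Real.log (1/y)) := by ring
        _ = 1 * (4^n * M n * (1 + Real.log (1/y))) := (one_mul _).symm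
        _ ≤ ((k:ℝ)+1) * (4^n * M n * (1 + Real.log (1/y))) :=
            mul_le_mul_of_nonneg_right (by linarith) (by positivity)
        _ = ((k:ℝ)+1) * 4^n * M n * (1 + Real.log (1/y)) := by ring
    · -- n < k*m : integral is a power
      rw [if_neg hc]
      have hkm1 : n + 1 ≤ k*m := by omega
      have hcast : ((n:ℝ)+1) ≤ (k:ℝ)*m := by exact_mod_cast hkm1
      have he'1 : e' + 1 = (n:ℝ)/k - m := by
        rw [he'def, hr1R]
        have hexpand : (1 - 1/(k:ℝ))*n = n - n/k := by
          field_simp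
        rw [hexpand]
        ring
      have hneg : e' + 1 ≤ -(1/(k:ℝ)) := by
        rw [he'1]
        have hdiv : ((n:ℝ)+1)/k ≤ m := by rw [div_le_iff₀ hk0]; linarith [mul_comm (m:ℝ) (k:ℝ)]
        have hadd : ((n:ℝ)+1)/k = n/k + 1/k := by ring
        rw [hadd] at hdiv
        linarith
      have hik : (0:ℝ) < 1/k := by positivity
      have hlt0 : e' + 1 < 0 := lt_of_le_of_lt hneg (by simp [hik]; positivity)
      have he'ne : e' ≠ -1 := by
        intro h
        rw [h] at hlt0
        norm_num at hlt0
      have hy'1 : 1 ≤ y ^ (e'+1) :=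
        Real.one_le_rpow_of_pos_of_le_one_of_nonpos hy0 hy1 (by linarith)
      have hintval : (∫ t in y..1, t ^ e') = (1 - y^(e'+1))/(e'+1) := by
        rw [integral_rpow (Or.inr ⟨he'ne, by
          rw [Set.uIcc_of_le hy1]
          intro h
          exact absurd h.1 (not_le.mpr hy0)⟩)]
        rw [Real.one_rpow]
      have hintle : (∫ t in y..1, t ^ e') ≤ k * y ^ (e'+1) := by
        rw [hintval]
        have hb0 : e' + 1 ≠ 0 := ne_of_lt hlt0
        have hflip : (1 - y^(e'+1))/(e'+1) = (y^(e'+1) - 1)/(-(e'+1)) := by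
          rw [div_eq_div_iff hb0 (by intro h; apply hb0; linarith)]
          ring
        rw [hflip]
        calc (y^(e'+1) - 1)/(-(e'+1)) ≤ y^(e'+1)/(1/k) := by
              apply div_le_div₀ (by positivity) (by linarith) hik (by linarith)
          _ = k * y^(e'+1) := by
              rw [div_eq_mul_inv, one_div, inv_inv]
              ring
      have hy'rw : y ^ (e'+1) = y ^ ((n:ℝ)/k - m) := by rw [he'1]
      calc (n.factorial : ℝ) / m.factorial * |iteratedDerivWithin m g (Set.Ioc 0 1) y|
          ≤ (n.factorial : ℝ) / m.factorial *
            (|∑ j ∈ Finset.range r, iteratedDerivWithin (m+j) g (Set.Ioc 0 1) 1 * (y-1)^j / j.factorial|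
             + |∫ t in y..1, iteratedDerivWithin n g (Set.Ioc 0 1) t * (y-t)^(r-1) / (r-1).factorial|) := by
            rw [htay]
            exact mul_le_mul_of_nonneg_left (abs_sub _ _) hT0.le
        _ ≤ 4^n * M n + (n.factorial : ℝ) / m.factorial * (M n / (r-1).factorial * (k * y^(e'+1))) := by
            rw [mul_add]
            apply add_le_add hpoly
            apply mul_le_mul_of_nonneg_left _ hT0.le
            refine hIabs.trans ?_
            exact mul_le_mul_of_nonneg_left hintle (by positivity)
        _ ≤ 4^n * M n * y^((n:ℝ)/k - m) + 4^n * M n * ((k:ℝ) * y^((n:ℝ)/k - m)) := by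
            apply add_le_add
            · calc (4:ℝ)^n * M n = (4^n * M n) * 1 := (mul_one _).symm
                _ ≤ (4^n * M n) * y^((n:ℝ)/k - m) :=
                    mul_le_mul_of_nonneg_left hyexp1 (by positivity)
                _ = 4^n * M n * y^((n:ℝ)/k - m) := by ring
            · rw [hy'rw]
              have h5 : (n.factorial : ℝ) / m.factorial * (M n / (r-1).factorial * ((k:ℝ) * y^((n:ℝ)/k - m)))
                  = ((n.factorial : ℝ) / m.factorial * (M n / (r-1).factorial)) * ((k:ℝ) * y^((n:ℝ)/k - m)) := by
                ring
              rw [h5]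
              have h6 : (0:ℝ) ≤ (k:ℝ) * y^((n:ℝ)/k - m) := by positivity
              calc ((n.factorial : ℝ) / m.factorial * (M n / (r-1).factorial)) * ((k:ℝ) * y^((n:ℝ)/k - m))
                  ≤ (4^n * M n) * ((k:ℝ) * y^((n:ℝ)/k - m)) :=
                    mul_le_mul_of_nonneg_right hTfrac h6
                _ = 4^n * M n * ((k:ℝ) * y^((n:ℝ)/k - m)) := by ring
        _ = (1 + (k:ℝ)) * 4^n * M n * y^((n:ℝ)/k - m) := by ring
        _ = ((k:ℝ)+1) * 4^n * M n * y^((n:ℝ)/k - m) := by ring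


/-- If `(M n / n!)` is non-decreasing and `|g^(n)(x)| ≤ M n / x^((1-1/k)n)` on `(0,1]`,
then `f(x) = g(x^k)` satisfies `|f^(n)(x)| ≤ A Cⁿ M n` when `k ∤ n` or `n = 0`,
and `|f^(n)(x)| ≤ A Cⁿ M n (1 + log(1/x))` when `k ∣ n`. -/
theorem power_substitution_forward_bound
    (M : ℕ → ℝ) (hM : ∀ n, 0 < M n)
    (hmono : Monotone fun n => M n / (Nat.factorial n : ℝ))
    (k : ℕ) (hk : 1 < k)
    (g : ℝ → ℝ) (hg : ContDiffOn ℝ (⊤ : ℕ∞) g (Set.Ioc 0 1))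
    (hbound : ∀ n : ℕ, ∀ x ∈ Set.Ioc (0:ℝ) 1,
      |iteratedDerivWithin n g (Set.Ioc 0 1) x| ≤ M n / x ^ ((1 - 1/(k:ℝ)) * n)) :
    ∃ A C : ℝ, 0 < A ∧ 0 < C ∧ ∀ n : ℕ, ∀ x ∈ Set.Ioc (0:ℝ) 1,
      ((¬ k ∣ n ∨ n = 0) →
        |iteratedDerivWithin n (fun y => g (y ^ k)) (Set.Ioc 0 1) x| ≤ A * C^n * M n) ∧
      (k ∣ n →
        |iteratedDerivWithin n (fun y => g (y ^ k)) (Set.Ioc 0 1) x| ≤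
          A * C^n * M n * (1 + Real.log (1/x))) := by
  have hk1 : 1 ≤ k := hk.le
  have hkR : (1:ℝ) < k := by exact_mod_cast hk
  have hk0 : (0:ℝ) < k := by linarith
  refine ⟨2*((k:ℝ)+1)^2, 16*k, by positivity, by positivity, ?_⟩
  intro n x hx
  have hx0 : (0:ℝ) < x := hx.1
  have hx1 : x ≤ 1 := hx.2
  have hlog : 0 ≤ Real.log (1/x) := Real.log_nonneg (by rw [le_div_iff₀ hx0]; linarith)
  have hxk : x^k ∈ Set.Ioc (0:ℝ) 1 := ⟨pow_pos hx0 k, pow_le_one₀ hx0.le hx1⟩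
  -- the n = 0 case
  rcases Nat.eq_zero_or_pos n with hn0 | hn0
  · subst hn0
    have h0 : |iteratedDerivWithin 0 (fun y => g (y ^ k)) (Set.Ioc 0 1) x| ≤ M 0 := by
      simp only [iteratedDerivWithin_zero]
      have := hbound 0 (x^k) hxk
      simpa using this
    have hA1 : (1:ℝ) ≤ 2*((k:ℝ)+1)^2 := by nlinarith
    constructor
    · intro _
      calc |iteratedDerivWithin 0 (fun y => g (y ^ k)) (Set.Ioc 0 1) x| ≤ M 0 := h0
        _ = 1 * M 0 := (one_mul _).symm
        _ ≤ (2*((k:ℝ)+1)^2) * M 0 := mul_le_mul_of_nonneg_right hA1 (hM 0).le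
        _ = 2*((k:ℝ)+1)^2 * (16*(k:ℝ))^0 * M 0 := by ring
    · intro _
      have hL : (1:ℝ) ≤ 1 + Real.log (1/x) := by linarith
      calc |iteratedDerivWithin 0 (fun y => g (y ^ k)) (Set.Ioc 0 1) x| ≤ M 0 := h0
        _ = 1 * M 0 * 1 := by ring
        _ ≤ (2*((k:ℝ)+1)^2) * M 0 * (1 + Real.log (1/x)) := by
            apply mul_le_mul (mul_le_mul_of_nonneg_right hA1 (hM 0).le) hL (by norm_num)
            exact mul_nonneg (by positivity) (hM 0).le
        _ = 2*((k:ℝ)+1)^2 * (16*(k:ℝ))^0 * M 0 * (1 + Real.log (1/x)) := by ring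
  -- main case : n > 0
  set L : ℝ := if k ∣ n then (1 + Real.log (1/x)) else 1 with hLdef
  have hL1 : 1 ≤ L := by
    rw [hLdef]
    split
    · linarith
    · exact le_refl 1
  have hL0 : 0 < L := lt_of_lt_of_le one_pos hL1
  -- per term bound
  have hterm : ∀ m ∈ Finset.range (n+1),
      |psfCoef k n m * x ^ ((k*m : ℤ) - n) * iteratedDerivWithin m g (Set.Ioc 0 1) (x^k)|
      ≤ ((k:ℝ)+1)^2 * (8*k)^n * M n * L := by
    intro m _
    by_cases hz : k*m < n ∨ n < m
    · rw [psfCoef_eq_zero k hk1 n m hz]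
      simp only [zero_mul, abs_zero]
      exact mul_nonneg (mul_nonneg (by positivity) (hM n).le) hL0.le
    · push_neg at hz
      obtain ⟨hkm, hm⟩ := hz
      have hgb := psf_gbound M hM hmono k hk g hg hbound n m hm hkm hxk
      have hT0 : (0:ℝ) < (n.factorial : ℝ) / m.factorial := by positivity
      have hGle : |iteratedDerivWithin m g (Set.Ioc 0 1) (x^k)| ≤
          ((m.factorial : ℝ) / n.factorial) * (((k:ℝ)+1) * 4^n * M n *
            (if n = k*m then (1 + Real.log (1/(x^k))) else (x^k) ^ ((n:ℝ)/k - m))) := by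
        have h1 := mul_le_mul_of_nonneg_left hgb
          (show (0:ℝ) ≤ (m.factorial : ℝ) / n.factorial by positivity)
        have h2 : ((m.factorial : ℝ) / n.factorial) * ((n.factorial : ℝ) / m.factorial *
            |iteratedDerivWithin m g (Set.Ioc 0 1) (x^k)|) =
            |iteratedDerivWithin m g (Set.Ioc 0 1) (x^k)| := by
          field_simp
        rw [h2] at h1
        exact h1
      have hc := psfCoef_abs_le k hk1 n m
      -- the zpow is a natural power
      have hzp : x ^ ((k*m : ℤ) - n) = x ^ ((k*m - n : ℕ)) := by
        rw [show ((k*m : ℤ) - n) = ((k*m - n : ℕ) : ℤ) by omega, zpow_natCast]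
      have hxp0 : (0:ℝ) < x ^ ((k*m - n : ℕ)) := pow_pos hx0 _
      -- key : x^(km-n) * B ≤ (k+1) * L
      have hkey : x ^ ((k*m - n : ℕ)) *
          (if n = k*m then (1 + Real.log (1/(x^k))) else (x^k) ^ ((n:ℝ)/k - m))
          ≤ ((k:ℝ)+1) * L := by
        by_cases hdiv : n = k*m
        · rw [if_pos hdiv]
          have h1 : k*m - n = 0 := by omega
          rw [h1, pow_zero, one_mul]
          have h2 : Real.log (1/(x^k)) = k * Real.log (1/x) := by
            rw [show (1:ℝ)/(x^k) = (1/x)^k by rw [div_pow, one_pow], Real.log_pow]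
          have h3 : L = 1 + Real.log (1/x) := by
            rw [hLdef, if_pos ⟨m, hdiv⟩]
          rw [h2, h3]
          nlinarith
        · rw [if_neg hdiv]
          have hlt : n < k*m := by omega
          -- x^(km-n) * (x^k)^(n/k - m) = 1
          have hxknn : (0:ℝ) ≤ x^k := (pow_pos hx0 k).le
          have h1 : ((x^k : ℝ)) ^ ((n:ℝ)/k - m) = x ^ ((n:ℝ) - k*m) := by
            rw [← Real.rpow_natCast x k, ← Real.rpow_mul hx0.le]
            congr 1
            field_simp
          have h2 : x ^ ((k*m - n : ℕ)) = x ^ (((k*m : ℝ)) - n) := by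
            rw [← Real.rpow_natCast x (k*m - n)]
            congr 1
            push_cast [Nat.cast_sub hkm]
            ring
          rw [h1, h2, ← Real.rpow_add hx0]
          have h3 : ((k*m : ℝ)) - n + ((n:ℝ) - k*m) = 0 := by ring
          rw [h3, Real.rpow_zero]
          nlinarith
      calc |psfCoef k n m * x ^ ((k*m : ℤ) - n) * iteratedDerivWithin m g (Set.Ioc 0 1) (x^k)|
          = |psfCoef k n m| * |x ^ ((k*m : ℤ) - n)| * |iteratedDerivWithin m g (Set.Ioc 0 1) (x^k)| := by
            rw [abs_mul, abs_mul]
        _ = |psfCoef k n m| * x ^ ((k*m - n : ℕ)) * |iteratedDerivWithin m g (Set.Ioc 0 1) (x^k)| := by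
            rw [hzp, abs_of_nonneg hxp0.le]
        _ ≤ ((n.factorial : ℝ) / m.factorial * (2*k)^n) * x ^ ((k*m - n : ℕ)) *
            (((m.factorial : ℝ) / n.factorial) * (((k:ℝ)+1) * 4^n * M n *
              (if n = k*m then (1 + Real.log (1/(x^k))) else (x^k) ^ ((n:ℝ)/k - m)))) := by
            apply mul_le_mul _ hGle (abs_nonneg _) (by positivity)
            exact mul_le_mul_of_nonneg_right hc hxp0.le
        _ = (2*k)^n * ((k:ℝ)+1) * 4^n * M n *
            (x ^ ((k*m - n : ℕ)) *
              (if n = k*m then (1 + Real.log (1/(x^k))) else (x^k) ^ ((n:ℝ)/k - m))) *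
            (((n.factorial : ℝ) / m.factorial) * ((m.factorial : ℝ) / n.factorial)) := by
            ring
        _ = (2*k)^n * ((k:ℝ)+1) * 4^n * M n *
            (x ^ ((k*m - n : ℕ)) *
              (if n = k*m then (1 + Real.log (1/(x^k))) else (x^k) ^ ((n:ℝ)/k - m))) := by
            have : ((n.factorial : ℝ) / m.factorial) * ((m.factorial : ℝ) / n.factorial) = 1 := by
              field_simp
            rw [this, mul_one]
        _ ≤ (2*k)^n * ((k:ℝ)+1) * 4^n * M n * (((k:ℝ)+1) * L) := by
            apply mul_le_mul_of_nonneg_left hkey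
              (mul_nonneg (by positivity) (hM n).le)
        _ = ((k:ℝ)+1)^2 * (8*k)^n * M n * L := by
            rw [show ((8:ℝ)*k)^n = (2*k)^n * 4^n by rw [← mul_pow]; ring_nf]
            ring
  -- sum up
  have hform := psf_formula k hk1 g hg n x hx
  have h2n : ((n:ℝ)) ≤ 2^n := by exact_mod_cast (n.lt_two_pow_self).le
  have hsumb : |iteratedDerivWithin n (fun y => g (y ^ k)) (Set.Ioc 0 1) x| ≤
      2*((k:ℝ)+1)^2 * (16*k)^n * M n * L := by
    rw [hform]
    calc |∑ m ∈ Finset.range (n+1), psfCoef k n m * x ^ ((k*m : ℤ) - n) *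
          iteratedDerivWithin m g (Set.Ioc 0 1) (x^k)|
        ≤ ∑ m ∈ Finset.range (n+1), |psfCoef k n m * x ^ ((k*m : ℤ) - n) *
          iteratedDerivWithin m g (Set.Ioc 0 1) (x^k)| := Finset.abs_sum_le_sum_abs _ _
      _ ≤ ∑ m ∈ Finset.range (n+1), ((k:ℝ)+1)^2 * (8*k)^n * M n * L := Finset.sum_le_sum hterm
      _ = (n+1) * (((k:ℝ)+1)^2 * (8*k)^n * M n * L) := by
          rw [Finset.sum_const, Finset.card_range]
          push_cast
          ring
      _ ≤ (2*2^n) * (((k:ℝ)+1)^2 * (8*k)^n * M n * L) := by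
          apply mul_le_mul_of_nonneg_right _
            (mul_nonneg (mul_nonneg (by positivity) (hM n).le) hL0.le)
          have h1n : (1:ℝ) ≤ 2^n := one_le_pow₀ (by norm_num)
          linarith
      _ = 2*((k:ℝ)+1)^2 * (16*k)^n * M n * L := by
          rw [show ((16:ℝ)*k)^n = 2^n * (8*k)^n by rw [← mul_pow]; ring_nf]
          ring
  constructor
  · rintro (hnd | hn0')
    · have hLval : L = 1 := by rw [hLdef, if_neg hnd]
      rw [hLval, mul_one] at hsumb
      exact hsumb
    · omega
  · intro hdvd
    have hLval : L = 1 + Real.log (1/x) := by rw [hLdef, if_pos hdvd]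
    rw [hLval] at hsumb
    exact hsumb
end

section
/- Let M be a positive log-convex sequence. Define the sequence M̂ by M̂_0 = M_0 and M̂_{n-1}/M̂_n = min(M_{n-1}/M_n, 1/n). Then M̂ is log-convex, M̂_n ≥ M_n for all n, the sequence (M̂_n/n!)_{n≥0} is non-decreasing, and if Σ_{n≥0} M_n/M_{n+1} = ∞ then Σ_{n≥0} M̂_n/M̂_{n+1} = ∞. -/
/-- Properties of the regularized sequence `M̂` defined by `M̂ 0 = M 0` and
`M̂ n / M̂ (n+1) = min (M n / M (n+1)) (1/(n+1))`, for a positive log-convex `M`. -/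
theorem regularized_sequence_properties
    (M hatM : ℕ → ℝ) (hM : ∀ n, 0 < M n)
    (hlc : ∀ n, M (n+1)^2 ≤ M n * M (n+2))
    (h0 : hatM 0 = M 0)
    (hratio : ∀ n : ℕ, hatM n / hatM (n+1) = min (M n / M (n+1)) (1/((n:ℝ)+1))) :
    (∀ n, hatM (n+1)^2 ≤ hatM n * hatM (n+2)) ∧
    (∀ n, M n ≤ hatM n) ∧
    Monotone (fun n => hatM n / (Nat.factorial n : ℝ)) ∧
    (¬ Summable (fun n => M n / M (n+1)) → ¬ Summable (fun n => hatM n / hatM (n+1))) := by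
  set a : ℕ → ℝ := fun n => M n / M (n+1) with hadef
  set r : ℕ → ℝ := fun n => min (a n) (1/((n:ℝ)+1)) with hrdef
  have hratio' : ∀ n, hatM n / hatM (n+1) = r n := fun n => hratio n
  have hapos : ∀ n, 0 < a n := fun n => div_pos (hM n) (hM (n+1))
  have hrpos : ∀ n, 0 < r n := fun n => lt_min (hapos n) (by positivity)
  have hrle : ∀ n, r n ≤ 1/((n:ℝ)+1) := fun n => min_le_right _ _
  have hra : ∀ n, r n ≤ a n := fun n => min_le_left _ _
  have haanti : ∀ n, a (n+1) ≤ a n := by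
    intro n
    show M (n+1) / M (n+2) ≤ M n / M (n+1)
    rw [div_le_div_iff₀ (hM _) (hM _)]
    nlinarith [hlc n]
  have hranti : ∀ n, r (n+1) ≤ r n := by
    intro n
    refine le_min (le_trans (min_le_left _ _) (haanti n)) (le_trans (min_le_right _ _) ?_)
    apply one_div_le_one_div_of_le (by positivity)
    push_cast; linarith
  have hhatpos : ∀ n, 0 < hatM n := by
    intro n; induction n with
    | zero => rw [h0]; exact hM 0
    | succ n ih =>
      rcases lt_trichotomy (hatM (n+1)) 0 with h' | h' | h'
      · have h1 := hratio' n
        have h2 : hatM n / hatM (n+1) < 0 := div_neg_of_pos_of_neg ih h'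
        linarith [hrpos n, h1 ▸ h2]
      · have h1 := hratio' n
        rw [h', div_zero] at h1
        exact absurd h1.symm (ne_of_gt (hrpos n))
      · exact h'
  have hmul : ∀ n, hatM n = r n * hatM (n+1) := fun n =>
    (div_eq_iff (ne_of_gt (hhatpos (n+1)))).mp (hratio' n)
  refine ⟨?_, ?_, ?_, ?_⟩
  · intro n
    have e1 := hmul n
    have e2 : hatM (n+1) = r (n+1) * hatM (n+2) := hmul (n+1)
    have e2' : hatM (n+1) ^ 2 = r (n+1) * hatM (n+2) * hatM (n+1) := by
      rw [sq]; nth_rewrite 1 [e2]; ring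
    have e1' : hatM n * hatM (n+2) = r n * hatM (n+2) * hatM (n+1) := by
      rw [e1]; ring
    have h3 : r (n+1) * hatM (n+2) * hatM (n+1) ≤ r n * hatM (n+2) * hatM (n+1) :=
      mul_le_mul_of_nonneg_right
        (mul_le_mul_of_nonneg_right (hranti n) (hhatpos (n+2)).le) (hhatpos (n+1)).le
    linarith [e2', e1', h3]
  · intro n
    induction n with
    | zero => rw [h0]
    | succ n ih =>
      have h1 : r n * M (n+1) ≤ M n := by
        have h2 : r n ≤ M n / M (n+1) := hra n
        exact (le_div_iff₀ (hM (n+1))).mp h2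
      nlinarith [hmul n, hrpos n]
  · apply monotone_nat_of_le_succ
    intro n
    have key : ((n:ℝ)+1) * hatM n ≤ hatM (n+1) := by
      have h2 : r n * ((n:ℝ)+1) ≤ 1 := (le_div_iff₀ (by positivity)).mp (hrle n)
      nlinarith [hmul n, hhatpos (n+1)]
    have hf : (0:ℝ) < (Nat.factorial n : ℝ) := by positivity
    have hf2 : (0:ℝ) < (Nat.factorial (n+1) : ℝ) := by positivity
    rw [div_le_div_iff₀ hf hf2]
    have hfe : (Nat.factorial (n+1) : ℝ) = ((n:ℝ)+1) * (Nat.factorial n : ℝ) := by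
      rw [Nat.factorial_succ]; push_cast; ring
    rw [hfe]
    nlinarith [key, hf, hhatpos n]
  · intro hdiv hsum
    have hsumr : Summable r := (summable_congr hratio').mp hsum
    have hanonneg : ∀ n, 0 ≤ a n := fun n => (hapos n).le
    have hamono : ∀ ⦃m n : ℕ⦄, 0 < m → m ≤ n → a n ≤ a m := by
      intro m n _ hmn
      induction n, hmn using Nat.le_induction with
      | base => rfl
      | succ n hmn ih => exact le_trans (haanti n) ih
    have hrmono : ∀ ⦃m n : ℕ⦄, 0 < m → m ≤ n → r n ≤ r m := by
      intro m n _ hmn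
      induction n, hmn using Nat.le_induction with
      | base => rfl
      | succ n hmn ih => exact le_trans (hranti n) ih
    have hcond : ¬ Summable (fun k : ℕ => (2:ℝ)^k * a (2^k)) := by
      intro h
      exact hdiv ((summable_condensed_iff_of_nonneg hanonneg hamono).mp h)
    have hcondr : Summable (fun k : ℕ => (2:ℝ)^k * r (2^k)) :=
      (summable_condensed_iff_of_nonneg (fun n => (hrpos n).le) hrmono).mpr hsumr
    set c : ℕ → ℝ := fun k => (2:ℝ)^k * a (2^k) with hcdef
    have hcnonneg : ∀ k, 0 ≤ c k := fun k => mul_nonneg (by positivity) (hanonneg _)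
    have hmin : Summable (fun k => min (c k) (1/2 : ℝ)) := by
      apply Summable.of_nonneg_of_le (fun k => le_min (hcnonneg k) (by norm_num)) _ hcondr
      intro k
      have hpow : (1:ℝ) ≤ 2^k := one_le_pow₀ (by norm_num)
      have hcast : ((2^k : ℕ) : ℝ) = (2:ℝ)^k := by push_cast; ring
      rcases min_cases (a (2^k)) (1/(((2^k : ℕ)):ℝ)+1)⁻¹ with h | h
      all_goals {
        have hrval := hrdef
        simp only [hrdef]
        rcases le_total (a (2^k)) (1/((((2^k : ℕ)):ℝ)+1)) with hle | hle
        · rw [min_eq_left hle]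
          exact le_trans (min_le_left _ _) le_rfl
        · rw [min_eq_right hle]
          refine le_trans (min_le_right _ _) ?_
          rw [hcast, mul_one_div, le_div_iff₀ (by positivity)]
          nlinarith }
    have htend := hmin.tendsto_atTop_zero
    have hev : ∀ᶠ k in Filter.atTop, min (c k) (1/2 : ℝ) < 1/2 :=
      htend.eventually_lt_const (by norm_num)
    obtain ⟨N, hN⟩ := Filter.eventually_atTop.mp hev
    have heq : ∀ k, min (c (k+N)) (1/2 : ℝ) = c (k+N) := by
      intro k
      have h := hN (k+N) (Nat.le_add_left N k)
      exact min_eq_left ((min_lt_iff.mp h).resolve_right (lt_irrefl _)).le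
    have hs1 : Summable (fun k => min (c (k+N)) (1/2 : ℝ)) :=
      (summable_nat_add_iff (f := fun k => min (c k) (1/2 : ℝ)) N).mpr hmin
    have hs2 : Summable c := (summable_nat_add_iff (f := c) N).mp (hs1.congr heq)
    exact hcond hs2
end
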